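/- arXiv:2303.04493 — 5 statements merged into one kernel-verified Lean document; each statement's English description precedes it below -/
import Mathlib

section
/- Let G be a group and ω a 3-cocycle on G with values in k^×. Then for all h, g, g', g'' ∈ G the identity γ(h)(gg',g'')·γ(h)(g,g') / ω(hgh⁻¹,hg'h⁻¹,hg''h⁻¹) = γ(h)(g,g'g'')·γ(h)(g',g'') / ω(g,g',g'') holds. -/
namespace DW

variable {G : Type*} [Group G] {M : Type*} [CommGroup M]

/-- The 3-cocycle condition for a function `ω : G³ → M` (`M` an abelian group, e.g. `kˣ`). -/
def IsCocycle (ω : G → G → G → M) : Prop :=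
  ∀ a b c d : G, ω (a * b) c d * ω a b (c * d) = ω a b c * ω a (b * c) d * ω b c d

/-- `τ(h,k)(d) = ω(h,k,d)·ω(hkd(hk)⁻¹,h,k)/ω(h,kdk⁻¹,k)`. -/
def tauc (ω : G → G → G → M) (h k d : G) : M :=
  ω h k d * ω (h * k * d * (h * k)⁻¹) h k * (ω h (k * d * k⁻¹) k)⁻¹

/-- `γ(h)(d,f) = ω(h,d,f)·ω(hdh⁻¹,hfh⁻¹,h)/ω(hdh⁻¹,h,f)`. -/
def gamc (ω : G → G → G → M) (h d f : G) : M :=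
  ω h d f * ω (h * d * h⁻¹) (h * f * h⁻¹) h * (ω (h * d * h⁻¹) h f)⁻¹

end DW

open DW

/-! `γ(h)` is an explicit 2-cochain whose coboundary is `ω / ω^h`, where `ω^h` is `ω` transported
along conjugation by `h`; this is the cocycle-level form of the fact that inner automorphisms act
trivially on group cohomology. Write `γ(h)` as `ω(h,·,·) · ω(·^h,·^h,h) / ω(·^h,h,·)`: the
coboundary of each factor is read off from one or two instances of the cocycle identity (using
`h d = d^h h`), and the leftover terms cancel between the three factors. -/

namespace DW

variable {G : Type*} [Group G] {M : Type*} [CommGroup M]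

def coboundary₂ (φ : G → G → M) (a b c : G) : M :=
  φ a (b * c) * φ b c / (φ (a * b) c * φ a b)

theorem coboundary₂_mul (φ ψ : G → G → M) (a b c : G) :
    coboundary₂ (φ * ψ) a b c = coboundary₂ φ a b c * coboundary₂ ψ a b c := by
  simp only [coboundary₂, Pi.mul_apply]
  apply Additive.ofMul.injective
  simp only [ofMul_mul, ofMul_div]
  abel

theorem coboundary₂_div (φ ψ : G → G → M) (a b c : G) :
    coboundary₂ (φ / ψ) a b c = coboundary₂ φ a b c / coboundary₂ ψ a b c := by
  simp only [coboundary₂, Pi.div_apply]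
  apply Additive.ofMul.injective
  simp only [ofMul_mul, ofMul_div]
  abel

theorem gamc_eq_mul_div (ω : G → G → G → M) (h : G) :
    gamc ω h
      = ω h * (fun d f => ω (h * d * h⁻¹) (h * f * h⁻¹) h) / fun d f => ω (h * d * h⁻¹) h f := by
  ext d f
  simp only [gamc, Pi.mul_apply, Pi.div_apply, div_eq_mul_inv]

namespace IsCocycle

variable {ω : G → G → G → M} (hω : IsCocycle ω)
include hω

theorem coboundary₂_slice_left (h a b c : G) :
    coboundary₂ (ω h) a b c = ω h b c * ω a b c / ω (h * a) b c := by
  have := congrArg Additive.ofMul (hω h a b c)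
  apply Additive.ofMul.injective
  simp only [coboundary₂, ofMul_mul, ofMul_div] at this ⊢
  linear_combination (norm := abel) this

theorem coboundary₂_conj_slice_right (h a b c : G) :
    coboundary₂ (fun d f => ω (h * d * h⁻¹) (h * f * h⁻¹) h) a b c
      = ω (h * a * h⁻¹) (h * b * h⁻¹) (h * c) / ω (h * a * h⁻¹) (h * b * h⁻¹) h
        / ω (h * a * h⁻¹) (h * b * h⁻¹) (h * c * h⁻¹) := by
  have := congrArg Additive.ofMul (hω (h * a * h⁻¹) (h * b * h⁻¹) (h * c * h⁻¹) h)
  apply Additive.ofMul.injective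
  simp only [coboundary₂, conj_mul, inv_mul_cancel_right, ofMul_mul, ofMul_div] at this ⊢
  linear_combination (norm := abel) -this

theorem coboundary₂_conj_slice_middle (h a b c : G) :
    coboundary₂ (fun d f => ω (h * d * h⁻¹) h f) a b c
      = ω h b c * ω (h * a * h⁻¹) (h * b * h⁻¹) (h * c) / ω (h * a) b c
        / ω (h * a * h⁻¹) (h * b * h⁻¹) h := by
  have h₁ := congrArg Additive.ofMul (hω (h * a * h⁻¹) h b c)
  have h₂ := congrArg Additive.ofMul (hω (h * a * h⁻¹) (h * b * h⁻¹) h c)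
  apply Additive.ofMul.injective
  simp only [coboundary₂, conj_mul, inv_mul_cancel_right, ofMul_mul, ofMul_div] at h₁ h₂ ⊢
  linear_combination (norm := abel) h₁ - h₂

theorem coboundary₂_gamc (h a b c : G) :
    coboundary₂ (gamc ω h) a b c = ω a b c / ω (h * a * h⁻¹) (h * b * h⁻¹) (h * c * h⁻¹) := by
  rw [gamc_eq_mul_div, coboundary₂_div, coboundary₂_mul, hω.coboundary₂_slice_left,
    hω.coboundary₂_conj_slice_right, hω.coboundary₂_conj_slice_middle]
  apply Additive.ofMul.injective
  simp only [ofMul_mul, ofMul_div]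
  abel

end IsCocycle

end DW

/-- Lemma A.2: for a 3-cocycle `ω` on `G` with values in `k^×`,
`γ(h)(gg',g'')·γ(h)(g,g') / ω(hgh⁻¹,hg'h⁻¹,hg''h⁻¹) = γ(h)(g,g'g'')·γ(h)(g',g'') / ω(g,g',g'')`. -/
theorem gamma_cocycle_identity {G : Type*} [Group G] {M : Type*} [CommGroup M]
    (ω : G → G → G → M) (hω : IsCocycle ω) :
    ∀ h g g' g'' : G,
      gamc ω h (g * g') g'' * gamc ω h g g'
          * (ω (h * g * h⁻¹) (h * g' * h⁻¹) (h * g'' * h⁻¹))⁻¹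
        = gamc ω h g (g' * g'') * gamc ω h g' g'' * (ω g g' g'')⁻¹ := by
  intro h g g' g''
  rw [← div_eq_mul_inv (_ * _) (ω (h * g * h⁻¹) _ _), ← div_eq_mul_inv (_ * _) (ω g g' g''),
    div_eq_div_iff_div_eq_div, ← inv_div, ← inv_div (ω g g' g''), inv_inj]
  exact hω.coboundary₂_gamc h g g' g''
end

section
/- Let G be a group and ω a 3-cocycle on G with values in k^×. Then for all g, h, k ∈ G the identity γ(k)(g,h)·τ(kgk⁻¹,k)(h) = γ(k)(ghg⁻¹,g)·τ(k,g)(h) holds. -/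
/-! Each side of the identity telescopes: the factor that `γ` divides out is one that `τ`
contributes and vice versa, so both sides equal `ω(k,g,h)·ω((kg)h(kg)⁻¹, kgk⁻¹, k)`. -/

namespace DW

variable {G : Type*} [Group G] {M : Type*} [CommGroup M]

theorem gamc_mul_tauc_conj (ω : G → G → G → M) (g h k : G) :
    gamc ω k g h * tauc ω (k * g * k⁻¹) k h =
      ω k g h * ω (k * g * h * (k * g)⁻¹) (k * g * k⁻¹) k := by
  have hcancel : k * g * k⁻¹ * k = k * g := by group
  simp only [gamc, tauc, hcancel]
  apply Additive.ofMul.injective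
  simp only [ofMul_mul, ofMul_inv]
  abel

theorem gamc_conj_mul_tauc (ω : G → G → G → M) (g h k : G) :
    gamc ω k (g * h * g⁻¹) g * tauc ω k g h =
      ω k g h * ω (k * g * h * (k * g)⁻¹) (k * g * k⁻¹) k := by
  have hconj : k * (g * h * g⁻¹) * k⁻¹ = k * g * h * (k * g)⁻¹ := by group
  simp only [gamc, tauc, hconj]
  apply Additive.ofMul.injective
  simp only [ofMul_mul, ofMul_inv]
  abel

end DW

open DW

theorem gamma_braid_identity_general {G : Type*} [Group G] {M : Type*} [CommGroup M]
    (ω : G → G → G → M) :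
    ∀ g h k : G,
      gamc ω k g h * tauc ω (k * g * k⁻¹) k h = gamc ω k (g * h * g⁻¹) g * tauc ω k g h := by
  intro g h k
  rw [gamc_mul_tauc_conj, gamc_conj_mul_tauc]

/-- Equation (2.12): for a 3-cocycle `ω` on `G` with values in `k^×`,
`γ(k)(g,h)·τ(kgk⁻¹,k)(h) = γ(k)(ghg⁻¹,g)·τ(k,g)(h)` for all `g,h,k ∈ G`. -/
theorem gamma_braid_identity {G : Type*} [Group G] {M : Type*} [CommGroup M]
    (ω : G → G → G → M) (hω : IsCocycle ω) :
    ∀ g h k : G,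
      gamc ω k g h * tauc ω (k * g * k⁻¹) k h = gamc ω k (g * h * g⁻¹) g * tauc ω k g h :=
  gamma_braid_identity_general ω
end

section
/- Let G be a group and ω a 3-cocycle on G with values in k^×. Then for all d, f ∈ G the identity γ(df)(d,f) = τ(dfd⁻¹,d)(d)·τ(d,f)(f) holds; equivalently, it is equal to the 3-cocycle condition for ω evaluated at the quadruple (dfdf⁻¹d⁻¹, dfd⁻¹, d, f). -/
open DW

namespace DW

variable {G : Type*} [Group G] {M : Type*} [CommGroup M]

theorem tauc_self (ω : G → G → G → M) (h k : G) :
    tauc ω h k k = ω (h * k * k * (h * k)⁻¹) h k := by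
  rw [tauc, mul_inv_cancel_right, mul_inv_cancel_comm]

/- With `a = dfdf⁻¹d⁻¹` and `b = dfd⁻¹` one has `ab = bd = df`, `(df)d(df)⁻¹ = a` and
`(df)f(df)⁻¹ = b`, so both sides only involve the five values of `ω` occurring in the
cocycle condition at `(a, b, d, f)`. -/
theorem gamc_mul_eq_tauc_mul_tauc_iff (ω : G → G → G → M) (d f : G) :
    (gamc ω (d * f) d f = tauc ω (d * f * d⁻¹) d d * tauc ω d f f) ↔
      (ω ((d * f * d * f⁻¹ * d⁻¹) * (d * f * d⁻¹)) d f
          * ω (d * f * d * f⁻¹ * d⁻¹) (d * f * d⁻¹) (d * f)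
        = ω (d * f * d * f⁻¹ * d⁻¹) (d * f * d⁻¹) d
          * ω (d * f * d * f⁻¹ * d⁻¹) ((d * f * d⁻¹) * d) f
          * ω (d * f * d⁻¹) d f) := by
  have hab : d * f * d * f⁻¹ * d⁻¹ * (d * f * d⁻¹) = d * f := by group
  have hbd : d * f * d⁻¹ * d = d * f := by group
  have hconj_d : d * f * d * (d * f)⁻¹ = d * f * d * f⁻¹ * d⁻¹ := by group
  have hconj_f : d * f * f * (d * f)⁻¹ = d * f * d⁻¹ := by group
  have hconj_dd : d * f * d⁻¹ * d * d * (d * f * d⁻¹ * d)⁻¹ = d * f * d * f⁻¹ * d⁻¹ := by group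
  rw [hab, hbd, gamc, tauc_self, tauc_self, hconj_d, hconj_f, hconj_dd,
    mul_inv_eq_iff_eq_mul, mul_right_comm (ω _ _ d)]

end DW

/-- for a 3-cocycle `ω` on `G` with values in `k^×`,
`γ(df)(d,f) = τ(dfd⁻¹,d)(d)·τ(d,f)(f)` for all `d,f ∈ G`; moreover this identity is
equivalent to the 3-cocycle condition for `ω` evaluated at the quadruple
`(dfdf⁻¹d⁻¹, dfd⁻¹, d, f)`. -/
theorem gamma_twist_identity {G : Type*} [Group G] {M : Type*} [CommGroup M]
    (ω : G → G → G → M) (hω : IsCocycle ω) :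
    (∀ d f : G, gamc ω (d * f) d f = tauc ω (d * f * d⁻¹) d d * tauc ω d f f) ∧
    ∀ d f : G,
      (gamc ω (d * f) d f = tauc ω (d * f * d⁻¹) d d * tauc ω d f f) ↔
        (ω ((d * f * d * f⁻¹ * d⁻¹) * (d * f * d⁻¹)) d f
            * ω (d * f * d * f⁻¹ * d⁻¹) (d * f * d⁻¹) (d * f)
          = ω (d * f * d * f⁻¹ * d⁻¹) (d * f * d⁻¹) d
            * ω (d * f * d * f⁻¹ * d⁻¹) ((d * f * d⁻¹) * d) f
            * ω (d * f * d⁻¹) d f) :=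
  ⟨fun d f => (gamc_mul_eq_tauc_mul_tauc_iff ω d f).2 (hω _ _ d f),
    gamc_mul_eq_tauc_mul_tauc_iff ω⟩
end

section
/- The maps θ_V : V → V defined on each twisted Yetter–Drinfeld module V over (G,ω) by θ_V(v_d) = d·v_d for v_d ∈ V_d form a ribbon twist on the braided monoidal category Z(Vect_G^ω): each θ_V is a natural isomorphism of twisted Yetter–Drinfeld modules, θ_{V⊗W} = (θ_V⊗θ_W)∘c_{W,V}∘c_{V,W} for all V, W, θ on the unit object is the identity, and θ is compatible with duals ((θ_V)^* = θ_{V^*}). -/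
open scoped TensorProduct

namespace DW

/-! ### Cocycle combinatorics -/

section Cocycle

variable {G : Type*} [Group G] {M : Type*} [CommGroup M]

/-- `ω` is normalized if it takes the value `1` whenever an argument is `1`. -/
def IsNormalized (ω : G → G → G → M) : Prop :=
  ∀ a b c : G, a = 1 ∨ b = 1 ∨ c = 1 → ω a b c = 1

end Cocycle

/-! ### Twisted Yetter–Drinfeld modules -/

/-- A twisted Yetter–Drinfeld module structure over `(G, ω)` on a `k`-vector space `M`:
a `G`-grading (given internally by submodules) together with a twisted `G`-action. -/
structure YDOn (k : Type*) [Field k] {G : Type*} [Group G] [DecidableEq G]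
    (ω : G → G → G → kˣ) (M : Type*) [AddCommGroup M] [Module k M] where
  grading : G → Submodule k M
  internal : DirectSum.IsInternal grading
  act : G → M →ₗ[k] M
  act_one : act 1 = LinearMap.id
  act_mem : ∀ (g d : G), ∀ v ∈ grading d, act g v ∈ grading (g * d * g⁻¹)
  act_act : ∀ (h g d : G), ∀ v ∈ grading d,
    act h (act g v) = ((tauc ω h g d : kˣ) : k) • act (h * g) v

section YD

variable {k : Type*} [Field k] {G : Type*} [Group G] [DecidableEq G] {ω : G → G → G → kˣ}

/-- Morphisms of twisted Yetter–Drinfeld modules: grading-preserving and `G`-equivariant. -/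
def IsYDHom {M N : Type*} [AddCommGroup M] [Module k M] [AddCommGroup N] [Module k N]
    (S : YDOn k ω M) (T : YDOn k ω N) (f : M →ₗ[k] N) : Prop :=
  (∀ d : G, ∀ v ∈ S.grading d, f v ∈ T.grading d) ∧
  ∀ g : G, f ∘ₗ S.act g = T.act g ∘ₗ f

/-- `θ` is the ribbon twist map, i.e. `θ(v_d) = d·v_d` on homogeneous elements. -/
def IsTwistMap {M : Type*} [AddCommGroup M] [Module k M] (S : YDOn k ω M)
    (θ : M →ₗ[k] M) : Prop :=
  ∀ d : G, ∀ v ∈ S.grading d, θ v = S.act d v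

/-- `T` is the tensor-product Yetter–Drinfeld structure on `V ⊗ W`:
grading `(V⊗W)_d = ⊕_{ab=d} V_a ⊗ W_b`, action `h·(v_a⊗w_b) = γ(h)(a,b) (h·v ⊗ h·w)`. -/
def IsTensorStruct {V W : Type*} [AddCommGroup V] [Module k V] [AddCommGroup W] [Module k W]
    (SV : YDOn k ω V) (SW : YDOn k ω W) (T : YDOn k ω (V ⊗[k] W)) : Prop :=
  (∀ d : G, T.grading d =
      ⨆ a : G, Submodule.map₂ (TensorProduct.mk k V W) (SV.grading a) (SW.grading (a⁻¹ * d))) ∧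
  ∀ (h a b : G) (v : V) (w : W), v ∈ SV.grading a → w ∈ SW.grading b →
    T.act h (v ⊗ₜ[k] w) = ((gamc ω h a b : kˣ) : k) • (SV.act h v ⊗ₜ[k] SW.act h w)

/-- `c` is the braiding `c_{V,W}(v_g ⊗ w) = (g·w) ⊗ v_g`. -/
def IsBraidingMap {V W : Type*} [AddCommGroup V] [Module k V] [AddCommGroup W] [Module k W]
    (SV : YDOn k ω V) (SW : YDOn k ω W) (c : V ⊗[k] W →ₗ[k] W ⊗[k] V) : Prop :=
  ∀ (g : G) (v : V) (w : W), v ∈ SV.grading g → c (v ⊗ₜ[k] w) = SW.act g w ⊗ₜ[k] v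

/-- `a` is the associator `α((u_g⊗v_h)⊗w_l) = ω(g,h,l)⁻¹ u⊗(v⊗w)`. -/
def IsAssocMap {U V W : Type*} [AddCommGroup U] [Module k U] [AddCommGroup V] [Module k V]
    [AddCommGroup W] [Module k W]
    (SU : YDOn k ω U) (SV : YDOn k ω V) (SW : YDOn k ω W)
    (a : (U ⊗[k] V) ⊗[k] W →ₗ[k] U ⊗[k] (V ⊗[k] W)) : Prop :=
  ∀ (g h l : G) (u : U) (v : V) (w : W),
    u ∈ SU.grading g → v ∈ SV.grading h → w ∈ SW.grading l →
    a ((u ⊗ₜ[k] v) ⊗ₜ[k] w) = (((ω g h l)⁻¹ : kˣ) : k) • (u ⊗ₜ[k] (v ⊗ₜ[k] w))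

/-- `a` is the inverse associator `α⁻¹(u_g⊗(v_h⊗w_l)) = ω(g,h,l) (u⊗v)⊗w`. -/
def IsAssocInvMap {U V W : Type*} [AddCommGroup U] [Module k U] [AddCommGroup V] [Module k V]
    [AddCommGroup W] [Module k W]
    (SU : YDOn k ω U) (SV : YDOn k ω V) (SW : YDOn k ω W)
    (a : U ⊗[k] (V ⊗[k] W) →ₗ[k] (U ⊗[k] V) ⊗[k] W) : Prop :=
  ∀ (g h l : G) (u : U) (v : V) (w : W),
    u ∈ SU.grading g → v ∈ SV.grading h → w ∈ SW.grading l →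
    a (u ⊗ₜ[k] (v ⊗ₜ[k] w)) = ((ω g h l : kˣ) : k) • ((u ⊗ₜ[k] v) ⊗ₜ[k] w)

/-- The unit object: `k` concentrated in degree `1` with trivial action. -/
def IsUnitStruct (S : YDOn k ω k) : Prop :=
  S.grading 1 = ⊤ ∧ (∀ d : G, d ≠ 1 → S.grading d = ⊥) ∧ ∀ g : G, S.act g = LinearMap.id

end YD

/-! ### The induction functor -/

section Induced

variable {k : Type*} [Field k] {G : Type*} [Group G] [DecidableEq G]
variable (ω : G → G → G → kˣ) (H : Subgroup G)

/-- Restriction of a 3-cocycle on `G` to a subgroup `H`. -/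
def resCocycle : ↥H → ↥H → ↥H → kˣ := fun a b c => ω ↑a ↑b ↑c

variable {V : Type*} [AddCommGroup V] [Module k V]

/-- The relations `g h ⊗ v_d = τ(g,h)(d)⁻¹ g ⊗ (h·v_d)` defining `I(V) = kG ⊗_{kH} V`. -/
noncomputable def indRel (S : YDOn k (resCocycle ω H) V) : Submodule k (G →₀ V) :=
  Submodule.span k
    {x | ∃ (g : G) (h d : ↥H) (v : V), v ∈ S.grading d ∧
      x = Finsupp.single (g * ↑h) v
        - (((tauc ω g ↑h ↑d)⁻¹ : kˣ) : k) • Finsupp.single g (S.act h v)}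

/-- The carrier of the induced module `I(V)`. -/
abbrev IndCarrier (S : YDOn k (resCocycle ω H) V) : Type _ :=
  (G →₀ V) ⧸ indRel ω H S

/-- The generator `g ⊗ v` of `I(V)`. -/
noncomputable def jgen (S : YDOn k (resCocycle ω H) V) (g : G) (v : V) : IndCarrier ω H S :=
  Submodule.Quotient.mk (Finsupp.single g v)

/-- `T` is the twisted Yetter–Drinfeld structure of the induced module `I(V)`:
`deg (g⊗v_e) = g e g⁻¹` and `c ⊳ (g⊗v_e) = τ(c,g)(e) (cg ⊗ v_e)`. -/
def IsIndStruct (S : YDOn k (resCocycle ω H) V) (T : YDOn k ω (IndCarrier ω H S)) : Prop :=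
  (∀ d : G, T.grading d = Submodule.span k
      {x | ∃ (g : G) (e : ↥H) (v : V), v ∈ S.grading e ∧ g * ↑e * g⁻¹ = d ∧
        x = jgen ω H S g v}) ∧
  ∀ (c g : G) (e : ↥H) (v : V), v ∈ S.grading e →
    T.act c (jgen ω H S g v) = ((tauc ω c g ↑e : kˣ) : k) • jgen ω H S (c * g) v

/-- `F` is the induced morphism `I(f)` of a morphism `f`. -/
def IsIndMap {W : Type*} [AddCommGroup W] [Module k W]
    (S : YDOn k (resCocycle ω H) V) (S' : YDOn k (resCocycle ω H) W)
    (f : V →ₗ[k] W) (F : IndCarrier ω H S →ₗ[k] IndCarrier ω H S') : Prop :=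
  ∀ (g : G) (v : V), F (jgen ω H S g v) = jgen ω H S' g (f v)

/-- `ν` is the oplax structure map
`ν(g ⊗ (a_d ⊗ b_f)) = γ(g)(d,f) (g⊗a) ⊗ (g⊗b)`. -/
def IsNuMap {A B : Type*} [AddCommGroup A] [Module k A] [AddCommGroup B] [Module k B]
    (SA : YDOn k (resCocycle ω H) A) (SB : YDOn k (resCocycle ω H) B)
    (SAB : YDOn k (resCocycle ω H) (A ⊗[k] B))
    (ν : IndCarrier ω H SAB →ₗ[k] IndCarrier ω H SA ⊗[k] IndCarrier ω H SB) : Prop :=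
  ∀ (g : G) (d f : ↥H) (a : A) (b : B), a ∈ SA.grading d → b ∈ SB.grading f →
    ν (jgen ω H SAB g (a ⊗ₜ[k] b)) =
      ((gamc ω g ↑d ↑f : kˣ) : k) • (jgen ω H SA g a ⊗ₜ[k] jgen ω H SB g b)

/-- `μ` is the lax structure map: zero across distinct cosets and
`μ((g⊗a_d) ⊗ (g⊗b_f)) = γ(g)(d,f)⁻¹ (g ⊗ (a⊗b))`. -/
def IsMuMap {A B : Type*} [AddCommGroup A] [Module k A] [AddCommGroup B] [Module k B]
    (SA : YDOn k (resCocycle ω H) A) (SB : YDOn k (resCocycle ω H) B)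
    (SAB : YDOn k (resCocycle ω H) (A ⊗[k] B))
    (μ : IndCarrier ω H SA ⊗[k] IndCarrier ω H SB →ₗ[k] IndCarrier ω H SAB) : Prop :=
  (∀ g g' : G, g⁻¹ * g' ∉ H → ∀ (a : A) (b : B),
      μ (jgen ω H SA g a ⊗ₜ[k] jgen ω H SB g' b) = 0) ∧
  ∀ (g : G) (d f : ↥H) (a : A) (b : B), a ∈ SA.grading d → b ∈ SB.grading f →
    μ (jgen ω H SA g a ⊗ₜ[k] jgen ω H SB g b) =
      (((gamc ω g ↑d ↑f)⁻¹ : kˣ) : k) • jgen ω H SAB g (a ⊗ₜ[k] b)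

/-- The counit `I(1) → 1`, `g ⊗ c ↦ c`. -/
def IsCounitMap (S1 : YDOn k (resCocycle ω H) k)
    (ε : IndCarrier ω H S1 →ₗ[k] k) : Prop :=
  ∀ (g : G) (c : k), ε (jgen ω H S1 g c) = c

/-- The unit `1 → I(1)`, `1 ↦ ∑ᵢ gᵢ ⊗ 1` over a set `R` of left coset representatives. -/
def IsUnitMap (S1 : YDOn k (resCocycle ω H) k) (R : Finset G)
    (η : k →ₗ[k] IndCarrier ω H S1) : Prop :=
  (∀ g : G, ∃! r, r ∈ R ∧ g⁻¹ * r ∈ H) ∧ η 1 = ∑ r ∈ R, jgen ω H S1 r (1 : k)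

end Induced

/-! ### The coset algebra and classification data -/

section AH

variable (k : Type*) [Field k] {G : Type*} [Group G]

/-- The twisted action of `G` on functions on `G/H` : `(c·f)(x) = f(c⁻¹x)`. -/
def cosetAct (H : Subgroup G) (c : G) : ((G ⧸ H) → k) →ₗ[k] ((G ⧸ H) → k) :=
  LinearMap.funLeft k k fun x => c⁻¹ • x

/-- Basis element `e_n` of the twisted group algebra `B(N,κ,ε)`. -/
noncomputable def bGen {H : Type*} [Group H] (N : Subgroup H) (n : ↥N) : ↥N →₀ k :=
  Finsupp.single n 1

end AH

section ClassData

variable {H : Type*} [Group H] {M : Type*} [CommGroup M]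

/-- The conditions on the classification data `(N, κ, ε)` from Davydov–Simmons. -/
def ClassData (ω : H → H → H → M) (N : Subgroup H) (κ ε : H → H → M) : Prop :=
  (∀ n ∈ N, κ n 1 = 1 ∧ κ 1 n = 1) ∧
  (∀ n ∈ N, ∀ m ∈ N, ∀ l ∈ N,
      ω n m l = κ n m * (κ m l)⁻¹ * κ (n * m) l * (κ n (m * l))⁻¹) ∧
  (∀ h g : H, ∀ n ∈ N, tauc ω h g n = ε h (g * n * g⁻¹) * ε g n * (ε (h * g) n)⁻¹) ∧
  (∀ h : H, ∀ n ∈ N, ∀ m ∈ N,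
      gamc ω h n m
        = ε h (n * m) * (ε h n)⁻¹ * (ε h m)⁻¹ * κ (h * n * h⁻¹) (h * m * h⁻¹) * (κ n m)⁻¹) ∧
  ∀ n ∈ N, ∀ m ∈ N, κ (n * m * n⁻¹) n = ε n m * κ n m

end ClassData

section BStruct

variable {k : Type*} [Field k] {H : Type*} [Group H] [DecidableEq H]

/-- The twisted Yetter–Drinfeld structure of `B(N,κ,ε)`:
`e_n` has degree `n` and `h·e_n = ε_h(n) e_{hnh⁻¹}`. -/
def IsBStruct (ω : H → H → H → kˣ) (N : Subgroup H) (hN : N.Normal) (ε : H → H → kˣ)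
    (S : YDOn k ω (↥N →₀ k)) : Prop :=
  (∀ d : H, S.grading d = Submodule.span k {x | ∃ n : ↥N, ↑n = d ∧ x = bGen k N n}) ∧
  ∀ (h : H) (n : ↥N), S.act h (bGen k N n) =
    ((ε h ↑n : kˣ) : k) • bGen k N ⟨h * ↑n * h⁻¹, hN.conj_mem ↑n n.2 h⟩

/-- The multiplication of `B(N,κ,ε)`: `e_n e_m = κ(n,m)⁻¹ e_{nm}`. -/
def IsBMul (N : Subgroup H) (κ : H → H → kˣ)
    (mulB : (↥N →₀ k) ⊗[k] (↥N →₀ k) →ₗ[k] (↥N →₀ k)) : Prop :=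
  ∀ n m : ↥N, mulB (bGen k N n ⊗ₜ[k] bGen k N m) =
    (((κ ↑n ↑m)⁻¹ : kˣ) : k) • bGen k N (n * m)

end BStruct

/-! ### Algebras, étale algebras and Frobenius algebras in the category -/

section Algebras

variable {k : Type*} [Field k] {G : Type*} [Group G] [DecidableEq G] {ω : G → G → G → kˣ}
variable {M : Type*} [AddCommGroup M] [Module k M]

/-- `(M, mulM, uM)` is a connected étale (= connected commutative separable) algebra in
`Z(Vect_G^ω)`. -/
def IsConnectedEtale (T : YDOn k ω M) (mulM : M ⊗[k] M →ₗ[k] M) (uM : k →ₗ[k] M) : Prop :=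
  -- the multiplication is a morphism in the category
  (∃ Tt : YDOn k ω (M ⊗[k] M), IsTensorStruct T T Tt ∧ IsYDHom Tt T mulM) ∧
  -- the unit is a morphism in the category
  (uM 1 ∈ T.grading 1) ∧ (∀ g : G, T.act g (uM 1) = uM 1) ∧
  -- unitality
  (∀ x : M, mulM (uM 1 ⊗ₜ[k] x) = x ∧ mulM (x ⊗ₜ[k] uM 1) = x) ∧
  -- associativity (with respect to the associator of the category)
  (∃ a, IsAssocMap T T T a ∧
      mulM ∘ₗ TensorProduct.map mulM LinearMap.id
        = mulM ∘ₗ TensorProduct.map LinearMap.id mulM ∘ₗ a) ∧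
  -- commutativity
  (∃ c, IsBraidingMap T T c ∧ mulM ∘ₗ c = mulM) ∧
  -- separability
  (∃ (Δ' : M →ₗ[k] M ⊗[k] M) (Tt : YDOn k ω (M ⊗[k] M))
      (a : (M ⊗[k] M) ⊗[k] M →ₗ[k] M ⊗[k] (M ⊗[k] M))
      (a' : M ⊗[k] (M ⊗[k] M) →ₗ[k] (M ⊗[k] M) ⊗[k] M),
      IsTensorStruct T T Tt ∧ IsAssocMap T T T a ∧ IsAssocInvMap T T T a' ∧
      IsYDHom T Tt Δ' ∧ mulM ∘ₗ Δ' = LinearMap.id ∧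
      TensorProduct.map LinearMap.id mulM ∘ₗ a ∘ₗ TensorProduct.map Δ' LinearMap.id
        = Δ' ∘ₗ mulM ∧
      Δ' ∘ₗ mulM
        = TensorProduct.map mulM LinearMap.id ∘ₗ a' ∘ₗ TensorProduct.map LinearMap.id Δ') ∧
  -- connectedness : Hom(1, M) is one-dimensional
  Module.finrank k
    ↥(T.grading 1 ⊓ ⨅ g : G, LinearMap.eqLocus (T.act g) (LinearMap.id : M →ₗ[k] M)) = 1

/-- `(M, mulM, uM)` is a rigid Frobenius (= connected commutative special Frobenius)
algebra in `Z(Vect_G^ω)`. -/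
def IsRigidFrobenius (T : YDOn k ω M) (mulM : M ⊗[k] M →ₗ[k] M) (uM : k →ₗ[k] M) : Prop :=
  IsConnectedEtale T mulM uM ∧
  ∃ (Δ : M →ₗ[k] M ⊗[k] M) (εM : M →ₗ[k] k),
    -- Δ and ε are morphisms in the category
    (∃ Tt : YDOn k ω (M ⊗[k] M), IsTensorStruct T T Tt ∧ IsYDHom T Tt Δ) ∧
    (∀ g : G, εM ∘ₗ T.act g = εM) ∧ (∀ d : G, d ≠ 1 → ∀ v ∈ T.grading d, εM v = 0) ∧
    -- coassociativity and counitality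
    (∀ a, IsAssocMap T T T a →
        a ∘ₗ TensorProduct.map Δ LinearMap.id ∘ₗ Δ = TensorProduct.map LinearMap.id Δ ∘ₗ Δ) ∧
    (TensorProduct.lid k M).toLinearMap ∘ₗ TensorProduct.map εM LinearMap.id ∘ₗ Δ
      = LinearMap.id ∧
    (TensorProduct.rid k M).toLinearMap ∘ₗ TensorProduct.map LinearMap.id εM ∘ₗ Δ
      = LinearMap.id ∧
    -- the Frobenius compatibility
    (∀ a a', IsAssocMap T T T a → IsAssocInvMap T T T a' →
        TensorProduct.map mulM LinearMap.id ∘ₗ a' ∘ₗ TensorProduct.map LinearMap.id Δ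
          = Δ ∘ₗ mulM ∧
        Δ ∘ₗ mulM = TensorProduct.map LinearMap.id mulM ∘ₗ a ∘ₗ TensorProduct.map Δ LinearMap.id) ∧
    -- specialness
    (∃ β : k, β ≠ 0 ∧ mulM ∘ₗ Δ = β • LinearMap.id) ∧
    ∃ β1 : k, β1 ≠ 0 ∧ εM (uM 1) = β1

/-- `(V, ρ)` is a local right module over the commutative algebra `(A, mulA, u)`. -/
def IsLocModule {A V : Type*} [AddCommGroup A] [Module k A] [AddCommGroup V] [Module k V]
    (SA : YDOn k ω A) (mulA : A ⊗[k] A →ₗ[k] A) (u : A)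
    (SV : YDOn k ω V) (ρ : V →ₗ[k] A →ₗ[k] V) : Prop :=
  (∀ d e : G, ∀ v ∈ SV.grading d, ∀ a ∈ SA.grading e, ρ v a ∈ SV.grading (d * e)) ∧
  (∀ v : V, ρ v u = v) ∧
  (∀ (d e f : G) (v : V) (a b : A), v ∈ SV.grading d → a ∈ SA.grading e → b ∈ SA.grading f →
      ρ (ρ v a) b = (((ω d e f)⁻¹ : kˣ) : k) • ρ v (mulA (a ⊗ₜ[k] b))) ∧
  (∀ (h d e : G) (v : V) (a : A), v ∈ SV.grading d → a ∈ SA.grading e →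
      SV.act h (ρ v a) = ((gamc ω h d e : kˣ) : k) • ρ (SV.act h v) (SA.act h a)) ∧
  ∀ (d e : G) (v : V) (a : A), v ∈ SV.grading d → a ∈ SA.grading e →
    ρ v a = ρ (SV.act (d * e * d⁻¹) v) (SA.act d a)

/-- The submodule of `X ⊗ Y` which is divided out to form the relative tensor product
`X ⊗_A Y` over a commutative algebra `A` (the left action on `Y` is obtained from the
right action through the braiding). -/
def relLoc {A X Y : Type*} [AddCommGroup A] [Module k A] [AddCommGroup X] [Module k X]
    [AddCommGroup Y] [Module k Y]
    (SA : YDOn k ω A) (SY : YDOn k ω Y)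
    (ρX : X →ₗ[k] A →ₗ[k] X) (ρY : Y →ₗ[k] A →ₗ[k] Y) : Submodule k (X ⊗[k] Y) :=
  Submodule.span k
    {t | ∃ (e : G) (a : A) (x : X) (y : Y), a ∈ SA.grading e ∧
      t = ρX x a ⊗ₜ[k] y - x ⊗ₜ[k] ρY (SY.act e y) a}

end Algebras

end DW

open DW

/-!
On a homogeneous vector `v ∈ V_d` the twist is the action of the degree of `v` itself, so on
homogeneous elements every axiom of a ribbon twist becomes an identity between the scalars `τ`
and `γ`. Commuting with the action is `τ(gdg⁻¹, g)(d) = τ(g, d)(d)`, which holds for any `ω`.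
The balancing axiom is `γ(ab)(a, b) = τ(e, aba⁻¹)(a) · τ(aba⁻¹, a)(b)` with `e = (ab)a(ab)⁻¹`,
which is the 3-cocycle condition at `(e, aba⁻¹, a, b)`. Compatibility with duals comes down to
`ω(d, d⁻¹, d) · ω(d⁻¹, d, d⁻¹) = 1`, the cocycle condition at `(d, d⁻¹, d, d⁻¹)` for a
normalized `ω`.
-/

theorem LinearMap.ext_of_iSup_eq_top {R ι M N : Type*} [Semiring R] [AddCommMonoid M]
    [Module R M] [AddCommMonoid N] [Module R N] {A : ι → Submodule R M} (hA : ⨆ i, A i = ⊤)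
    {f g : M →ₗ[R] N} (h : ∀ i, ∀ x ∈ A i, f x = g x) : f = g :=
  LinearMap.ext_on (s := ⋃ i, (A i : Set M)) (by rw [← Submodule.iSup_eq_span, hA])
    fun x hx => by
      obtain ⟨i, hi⟩ := Set.mem_iUnion.mp hx
      exact h i x hi

theorem DirectSum.IsInternal.exists_linearMap_eq_on {R ι M N : Type*} [Semiring R]
    [DecidableEq ι] [AddCommMonoid M] [Module R M] [AddCommMonoid N] [Module R N]
    {A : ι → Submodule R M} (hA : DirectSum.IsInternal A) (f : ι → M →ₗ[R] N) :
    ∃ F : M →ₗ[R] N, ∀ i, ∀ x ∈ A i, F x = f i x := by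
  let e := LinearEquiv.ofBijective (DirectSum.coeLinearMap A) hA
  refine ⟨DirectSum.toModule R ι N (fun i => f i ∘ₗ (A i).subtype) ∘ₗ e.symm.toLinearMap,
    fun i x hx => ?_⟩
  have he : e.symm x = DirectSum.lof R ι (fun i => A i) i ⟨x, hx⟩ := by
    rw [LinearEquiv.symm_apply_eq]
    exact (DirectSum.coeLinearMap_of A i ⟨x, hx⟩).symm
  simp [he]

namespace DW

section Cocycle

variable {G : Type*} [Group G] {M : Type*} [CommGroup M] {ω : G → G → G → M}

theorem tauc_of_conj_eq (ω : G → G → G → M) {h g d : G} (hgd : g * d * g⁻¹ = h) :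
    tauc ω h g d = ω h g d := by
  have hconj : h * g * d * (h * g)⁻¹ = h := by rw [← hgd]; group
  rw [tauc, hconj, hgd, mul_inv_cancel_right]

theorem tauc_conj_self (ω : G → G → G → M) (g d : G) :
    tauc ω (g * d * g⁻¹) g d = tauc ω g d d := by
  rw [tauc_of_conj_eq ω rfl, tauc, show g * d * d * (g * d)⁻¹ = g * d * g⁻¹ by group,
    mul_inv_cancel_right, mul_inv_cancel_comm]

theorem IsCocycle.gamc_mul_self (hω : IsCocycle ω) (a b : G) :
    gamc ω (a * b) a b =
      tauc ω (a * b * a * (a * b)⁻¹) (a * b * a⁻¹) a * tauc ω (a * b * a⁻¹) a b := by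
  rw [tauc_of_conj_eq ω (by group), tauc_of_conj_eq ω rfl, gamc,
    show a * b * b * (a * b)⁻¹ = a * b * a⁻¹ by group]
  have h := hω (a * b * a * (a * b)⁻¹) (a * b * a⁻¹) a b
  rw [show a * b * a * (a * b)⁻¹ * (a * b * a⁻¹) = a * b by group,
    show a * b * a⁻¹ * a = a * b by group] at h
  rw [h, mul_right_comm _ (ω (a * b * a * (a * b)⁻¹) (a * b) b), mul_inv_cancel_right]

theorem IsCocycle.mul_inv_mul_inv (hω : IsCocycle ω) (hnorm : IsNormalized ω) (d : G) :
    ω d d⁻¹ d * ω d⁻¹ d d⁻¹ = 1 := by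
  have h := hω d d⁻¹ d d⁻¹
  rw [mul_inv_cancel, inv_mul_cancel, hnorm 1 d d⁻¹ (by tauto), hnorm d d⁻¹ 1 (by tauto),
    hnorm d 1 d⁻¹ (by tauto), mul_one, mul_one] at h
  exact h.symm

theorem IsCocycle.tauc_mul_gamc_inv (hω : IsCocycle ω) (hnorm : IsNormalized ω) (d : G) :
    tauc ω d⁻¹ d d * gamc ω d⁻¹ d d⁻¹ = 1 := by
  rw [tauc, gamc, show d⁻¹ * d * d * (d⁻¹ * d)⁻¹ = d by group, mul_inv_cancel_right,
    show d⁻¹ * d * d⁻¹⁻¹ = d by group, show d⁻¹ * d⁻¹ * d⁻¹⁻¹ = d⁻¹ by group,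
    mul_inv_cancel_comm, mul_inv_cancel_right, hω.mul_inv_mul_inv hnorm]

end Cocycle

section YD

variable {k : Type*} [Field k] {G : Type*} [Group G] [DecidableEq G] {ω : G → G → G → kˣ}
variable {V W : Type*} [AddCommGroup V] [Module k V] [AddCommGroup W] [Module k W]

theorem YDOn.linearMap_ext {N : Type*} [AddCommGroup N] [Module k N] (S : YDOn k ω V)
    {f g : V →ₗ[k] N} (h : ∀ d : G, ∀ v ∈ S.grading d, f v = g v) : f = g :=
  LinearMap.ext_of_iSup_eq_top S.internal.submodule_iSup_eq_top h

theorem YDOn.tensorProduct_ext {N : Type*} [AddCommGroup N] [Module k N] (SV : YDOn k ω V)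
    (SW : YDOn k ω W) {f g : V ⊗[k] W →ₗ[k] N}
    (h : ∀ a b : G, ∀ v ∈ SV.grading a, ∀ w ∈ SW.grading b, f (v ⊗ₜ w) = g (v ⊗ₜ w)) :
    f = g :=
  TensorProduct.ext <| SV.linearMap_ext fun a v hv =>
    SW.linearMap_ext fun b w hw => h a b v hv w hw

theorem YDOn.act_mem_of_eq (S : YDOn k ω V) {g d e : G} {v : V} (hv : v ∈ S.grading d)
    (he : g * d * g⁻¹ = e) : S.act g v ∈ S.grading e :=
  he ▸ S.act_mem g d v hv

theorem YDOn.act_inv_act (S : YDOn k ω V) {g d : G} {v : V} (hv : v ∈ S.grading d) :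
    S.act g⁻¹ (S.act g v) = tauc ω g⁻¹ g d • v := by
  rw [S.act_act _ _ _ v hv, inv_mul_cancel, S.act_one, LinearMap.id_apply, Units.smul_def]

theorem YDOn.act_act_inv (S : YDOn k ω V) {g d : G} {v : V} (hv : v ∈ S.grading d) :
    S.act g (S.act g⁻¹ v) = tauc ω g g⁻¹ d • v := by
  rw [S.act_act _ _ _ v hv, mul_inv_cancel, S.act_one, LinearMap.id_apply, Units.smul_def]

namespace IsTwistMap

variable {S : YDOn k ω V} {θ : V →ₗ[k] V}

theorem mem_grading (hθ : IsTwistMap S θ) {d : G} {v : V} (hv : v ∈ S.grading d) :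
    θ v ∈ S.grading d :=
  hθ d v hv ▸ S.act_mem_of_eq hv (by group)

theorem isYDHom (hθ : IsTwistMap S θ) : IsYDHom S S θ := by
  refine ⟨fun d v hv => hθ.mem_grading hv, fun g => S.linearMap_ext fun d v hv => ?_⟩
  rw [LinearMap.comp_apply, LinearMap.comp_apply, hθ _ _ (S.act_mem g d v hv), hθ d v hv,
    S.act_act _ _ _ v hv, S.act_act _ _ _ v hv, tauc_conj_self,
    show g * d * g⁻¹ * g = g * d by group]

theorem bijective (hθ : IsTwistMap S θ) : Function.Bijective θ := by
  obtain ⟨ψ₁, hψ₁⟩ := S.internal.exists_linearMap_eq_on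
    fun d => ((tauc ω d⁻¹ d d)⁻¹ : kˣ) • S.act d⁻¹
  obtain ⟨ψ₂, hψ₂⟩ := S.internal.exists_linearMap_eq_on
    fun d => ((tauc ω d d⁻¹ d)⁻¹ : kˣ) • S.act d⁻¹
  have hleft : ψ₁ ∘ₗ θ = LinearMap.id := S.linearMap_ext fun d v hv => by
    rw [LinearMap.comp_apply, hψ₁ d _ (hθ.mem_grading hv), LinearMap.smul_apply, hθ d v hv,
      S.act_inv_act hv, inv_smul_smul, LinearMap.id_apply]
  have hright : θ ∘ₗ ψ₂ = LinearMap.id := S.linearMap_ext fun d v hv => by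
    rw [LinearMap.comp_apply, hψ₂ d v hv, LinearMap.smul_apply, LinearMap.map_smul_of_tower,
      hθ d _ (S.act_mem_of_eq hv (by group)), S.act_act_inv hv, inv_smul_smul,
      LinearMap.id_apply]
  exact ⟨Function.LeftInverse.injective (g := ψ₁) (LinearMap.congr_fun hleft),
    Function.RightInverse.surjective (f := θ) (LinearMap.congr_fun hright)⟩

theorem tensor_eq_map_comp_braiding (hω : IsCocycle ω) {SV : YDOn k ω V} {SW : YDOn k ω W}
    {T : YDOn k ω (V ⊗[k] W)} (hT : IsTensorStruct SV SW T) {cVW : V ⊗[k] W →ₗ[k] W ⊗[k] V}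
    {cWV : W ⊗[k] V →ₗ[k] V ⊗[k] W} (hcVW : IsBraidingMap SV SW cVW)
    (hcWV : IsBraidingMap SW SV cWV) {θV : V →ₗ[k] V} {θW : W →ₗ[k] W}
    {θT : V ⊗[k] W →ₗ[k] V ⊗[k] W} (hθV : IsTwistMap SV θV) (hθW : IsTwistMap SW θW)
    (hθT : IsTwistMap T θT) : θT = TensorProduct.map θV θW ∘ₗ cWV ∘ₗ cVW := by
  refine SV.tensorProduct_ext SW fun a b v hv w hw => ?_
  have hvw : v ⊗ₜ[k] w ∈ T.grading (a * b) := by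
    rw [hT.1]
    refine Submodule.mem_iSup_of_mem a (Submodule.apply_mem_map₂ _ hv ?_)
    rwa [inv_mul_cancel_left]
  have haw : SW.act a w ∈ SW.grading (a * b * a⁻¹) := SW.act_mem a b w hw
  have hcv : SV.act (a * b * a⁻¹) v ∈ SV.grading (a * b * a * (a * b)⁻¹) :=
    SV.act_mem_of_eq hv (by group)
  rw [hθT _ _ hvw, hT.2 _ _ _ v w hv hw, LinearMap.comp_apply, LinearMap.comp_apply,
    hcVW a v w hv, hcWV _ _ v haw, TensorProduct.map_tmul, hθV _ _ hcv, hθW _ _ haw,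
    SV.act_act _ _ _ v hv, SW.act_act _ _ _ w hw, TensorProduct.smul_tmul_smul,
    ← Units.val_mul, ← hω.gamc_mul_self,
    show a * b * a * (a * b)⁻¹ * (a * b * a⁻¹) = a * b by group,
    show a * b * a⁻¹ * a = a * b by group]

theorem eq_id_of_grading_eq_bot (hθ : IsTwistMap S θ)
    (hgr : ∀ d : G, d ≠ 1 → S.grading d = ⊥) : θ = LinearMap.id :=
  S.linearMap_ext fun d v hv => by
    obtain rfl | hd := eq_or_ne d 1
    · rw [hθ 1 v hv, S.act_one]
    · rw [hgr d hd, Submodule.mem_bot] at hv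
      rw [hv, map_zero, map_zero]

theorem dualMap_eq (hω : IsCocycle ω) (hnorm : IsNormalized ω) {SV : YDOn k ω V}
    {D : YDOn k ω (Module.Dual k V)}
    (hDgr : ∀ d : G, D.grading d = ⨅ (e : G) (_ : e ≠ d⁻¹), (SV.grading e).dualAnnihilator)
    (hpair : ∀ (g d e : G) (f : Module.Dual k V) (v : V), f ∈ D.grading d →
      v ∈ SV.grading e → D.act g f (SV.act g v) = (((gamc ω g d e)⁻¹ : kˣ) : k) * f v)
    {θV : V →ₗ[k] V} {θD : Module.Dual k V →ₗ[k] Module.Dual k V} (hθV : IsTwistMap SV θV)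
    (hθD : IsTwistMap D θD) : θD = θV.dualMap := by
  have hann : ∀ {d e : G}, e ≠ d⁻¹ → ∀ f ∈ D.grading d, ∀ v ∈ SV.grading e, f v = 0 := by
    intro d e he f hf v hv
    rw [hDgr d, Submodule.mem_iInf] at hf
    exact (Submodule.mem_dualAnnihilator _).mp (Submodule.mem_iInf _ |>.mp (hf e) he) v hv
  refine D.linearMap_ext fun d f hf => SV.linearMap_ext fun e v hv => ?_
  rw [hθD d f hf, LinearMap.dualMap_apply, hθV e v hv]
  have hdf : D.act d f ∈ D.grading d := D.act_mem_of_eq hf (by group)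
  obtain rfl | he := eq_or_ne e d⁻¹
  · have h := hpair d⁻¹ d d⁻¹ (D.act d f) v hdf hv
    rw [D.act_inv_act hf, Units.smul_def, LinearMap.smul_apply, smul_eq_mul,
      ← eq_inv_of_mul_eq_one_left (hω.tauc_mul_gamc_inv hnorm d)] at h
    exact (mul_left_cancel₀ (Units.ne_zero _) h).symm
  · rw [hann he _ hdf v hv, hann he f hf _ (SV.act_mem_of_eq hv (by group))]

end IsTwistMap

theorem IsYDHom.comp_twist {SV : YDOn k ω V} {SW : YDOn k ω W} {f : V →ₗ[k] W}
    {θV : V →ₗ[k] V} {θW : W →ₗ[k] W} (hf : IsYDHom SV SW f) (hθV : IsTwistMap SV θV)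
    (hθW : IsTwistMap SW θW) : f ∘ₗ θV = θW ∘ₗ f :=
  SV.linearMap_ext fun d v hv => by
    rw [LinearMap.comp_apply, LinearMap.comp_apply, hθV d v hv, hθW d _ (hf.1 d v hv)]
    exact LinearMap.congr_fun (hf.2 d) v

end YD

end DW

theorem ribbon_twist_general {k : Type*} [Field k] {G : Type*} [Group G]
    [DecidableEq G] (ω : G → G → G → kˣ) (hω : IsCocycle ω) (hnorm : IsNormalized ω) :
    -- each θ_V is an isomorphism of twisted Yetter–Drinfeld modules
    (∀ (V : Type) [AddCommGroup V] [Module k V] (S : YDOn k ω V) (θ : V →ₗ[k] V),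
        IsTwistMap S θ → IsYDHom S S θ ∧ Function.Bijective θ) ∧
    -- naturality of θ
    (∀ (V W : Type) [AddCommGroup V] [Module k V] [AddCommGroup W] [Module k W]
        (SV : YDOn k ω V) (SW : YDOn k ω W) (f : V →ₗ[k] W)
        (θV : V →ₗ[k] V) (θW : W →ₗ[k] W),
        IsYDHom SV SW f → IsTwistMap SV θV → IsTwistMap SW θW → f ∘ₗ θV = θW ∘ₗ f) ∧
    -- θ_{V⊗W} = (θ_V ⊗ θ_W) ∘ c_{W,V} ∘ c_{V,W}
    (∀ (V W : Type) [AddCommGroup V] [Module k V] [AddCommGroup W] [Module k W]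
        (SV : YDOn k ω V) (SW : YDOn k ω W) (T : YDOn k ω (V ⊗[k] W)),
        IsTensorStruct SV SW T →
        ∀ (cVW : V ⊗[k] W →ₗ[k] W ⊗[k] V) (cWV : W ⊗[k] V →ₗ[k] V ⊗[k] W),
          IsBraidingMap SV SW cVW → IsBraidingMap SW SV cWV →
          ∀ (θV : V →ₗ[k] V) (θW : W →ₗ[k] W) (θT : V ⊗[k] W →ₗ[k] V ⊗[k] W),
            IsTwistMap SV θV → IsTwistMap SW θW → IsTwistMap T θT →
            θT = TensorProduct.map θV θW ∘ₗ cWV ∘ₗ cVW) ∧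
    -- θ is the identity on the unit object
    (∀ (U : Type) [AddCommGroup U] [Module k U] (SU : YDOn k ω U) (θU : U →ₗ[k] U),
        (∀ d : G, d ≠ 1 → SU.grading d = ⊥) → IsTwistMap SU θU → θU = LinearMap.id) ∧
    -- compatibility with duals : (θ_V)^* = θ_{V^*}
    (∀ (V : Type) [AddCommGroup V] [Module k V] [Module.Finite k V]
        (SV : YDOn k ω V) (D : YDOn k ω (Module.Dual k V)),
        (∀ d : G, D.grading d = ⨅ (e : G) (_ : e ≠ d⁻¹), (SV.grading e).dualAnnihilator) →
        (∀ (g d e : G) (f : Module.Dual k V) (v : V), f ∈ D.grading d → v ∈ SV.grading e →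
            D.act g f (SV.act g v) = (((gamc ω g d e)⁻¹ : kˣ) : k) * f v) →
        ∀ (θV : V →ₗ[k] V) (θD : Module.Dual k V →ₗ[k] Module.Dual k V),
          IsTwistMap SV θV → IsTwistMap D θD → θD = LinearMap.dualMap θV) := by
  refine ⟨fun V _ _ S θ hθ => ⟨hθ.isYDHom, hθ.bijective⟩, ?_, ?_, ?_, ?_⟩
  · intro V W _ _ _ _ SV SW f θV θW hf hθV hθW
    exact hf.comp_twist hθV hθW
  · intro V W _ _ _ _ SV SW T hT cVW cWV hcVW hcWV θV θW θT hθV hθW hθT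
    exact IsTwistMap.tensor_eq_map_comp_braiding hω hT hcVW hcWV hθV hθW hθT
  · intro U _ _ SU θU hgr hθ
    exact hθ.eq_id_of_grading_eq_bot hgr
  · intro V _ _ _ SV D hDgr hpair θV θD hθV hθD
    exact IsTwistMap.dualMap_eq hω hnorm hDgr hpair hθV hθD

/-- Proposition 2.12: the maps `θ_V(v_d) = d·v_d` form a ribbon twist on
the braided monoidal category `Z(Vect_G^ω)` of twisted Yetter–Drinfeld modules:
each `θ_V` is a natural isomorphism of twisted Yetter–Drinfeld modules,
`θ_{V⊗W} = (θ_V ⊗ θ_W) ∘ c_{W,V} ∘ c_{V,W}`, `θ` is the identity on the unit object,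
and `(θ_V)^* = θ_{V^*}`. -/
theorem ribbon_twist {k : Type*} [Field k] [IsAlgClosed k] {G : Type*} [Group G] [Finite G]
    [DecidableEq G] (ω : G → G → G → kˣ) (hω : IsCocycle ω) (hnorm : IsNormalized ω) :
    -- each θ_V is an isomorphism of twisted Yetter–Drinfeld modules
    (∀ (V : Type) [AddCommGroup V] [Module k V] (S : YDOn k ω V) (θ : V →ₗ[k] V),
        IsTwistMap S θ → IsYDHom S S θ ∧ Function.Bijective θ) ∧
    -- naturality of θ
    (∀ (V W : Type) [AddCommGroup V] [Module k V] [AddCommGroup W] [Module k W]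
        (SV : YDOn k ω V) (SW : YDOn k ω W) (f : V →ₗ[k] W)
        (θV : V →ₗ[k] V) (θW : W →ₗ[k] W),
        IsYDHom SV SW f → IsTwistMap SV θV → IsTwistMap SW θW → f ∘ₗ θV = θW ∘ₗ f) ∧
    -- θ_{V⊗W} = (θ_V ⊗ θ_W) ∘ c_{W,V} ∘ c_{V,W}
    (∀ (V W : Type) [AddCommGroup V] [Module k V] [AddCommGroup W] [Module k W]
        (SV : YDOn k ω V) (SW : YDOn k ω W) (T : YDOn k ω (V ⊗[k] W)),
        IsTensorStruct SV SW T →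
        ∀ (cVW : V ⊗[k] W →ₗ[k] W ⊗[k] V) (cWV : W ⊗[k] V →ₗ[k] V ⊗[k] W),
          IsBraidingMap SV SW cVW → IsBraidingMap SW SV cWV →
          ∀ (θV : V →ₗ[k] V) (θW : W →ₗ[k] W) (θT : V ⊗[k] W →ₗ[k] V ⊗[k] W),
            IsTwistMap SV θV → IsTwistMap SW θW → IsTwistMap T θT →
            θT = TensorProduct.map θV θW ∘ₗ cWV ∘ₗ cVW) ∧
    -- θ is the identity on the unit object
    (∀ (U : Type) [AddCommGroup U] [Module k U] (SU : YDOn k ω U) (θU : U →ₗ[k] U),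
        (∀ d : G, d ≠ 1 → SU.grading d = ⊥) → IsTwistMap SU θU → θU = LinearMap.id) ∧
    -- compatibility with duals : (θ_V)^* = θ_{V^*}
    (∀ (V : Type) [AddCommGroup V] [Module k V] [Module.Finite k V]
        (SV : YDOn k ω V) (D : YDOn k ω (Module.Dual k V)),
        (∀ d : G, D.grading d = ⨅ (e : G) (_ : e ≠ d⁻¹), (SV.grading e).dualAnnihilator) →
        (∀ (g d e : G) (f : Module.Dual k V) (v : V), f ∈ D.grading d → v ∈ SV.grading e →
            D.act g f (SV.act g v) = (((gamc ω g d e)⁻¹ : kˣ) : k) * f v) →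
        ∀ (θV : V →ₗ[k] V) (θD : Module.Dual k V →ₗ[k] Module.Dual k V),
          IsTwistMap SV θV → IsTwistMap D θD → θD = LinearMap.dualMap θV) :=
  ribbon_twist_general ω hω hnorm
end

section
/- The natural transformation μ_{V,W} : I(V)⊗I(W) → I(V⊗W) defined by μ_{V,W}((g⊗v_d)⊗(k⊗w_f)) = 0 when g⁻¹k ∉ H and μ_{V,W}((g⊗v_d)⊗(g⊗w_f)) = γ(g)(d,f)⁻¹ g⊗(v_d⊗w_f), together with the unit 1 → I(1) sending 1 to the sum Σ_i g_i⊗1 over a set {g_i} of representatives of the left cosets of H in G, equips the induction functor I : Z(Vect_H^ω) → Z(Vect_G^ω) with a lax monoidal structure: each μ_{V,W} is a morphism of twisted Yetter–Drinfeld modules over (G,ω), and the lax associativity and unitality coherence conditions hold. -/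
open scoped TensorProduct

/-!
`I(V)` is spanned by the elements `g ⊗ v_d` with `v_d` homogeneous, and `gh ⊗ v_d`
(`h ∈ H`) is a multiple of `g ⊗ (h·v_d)`. So every identity reduces to generators with one
common coset representative `g`: across different cosets `μ` vanishes, and on a single coset
both sides are multiples of the same vector, the scalars agreeing by two identities between
`γ`, `τ` and `ω`, each a consequence of the 3-cocycle condition. For unitality only the
representative of the coset of `g` contributes to `Σᵢ gᵢ ⊗ 1`, and the normalization of `ω`
makes all the scalars trivial.
-/

namespace TensorProduct

variable {R M N P : Type*} [CommSemiring R] [AddCommMonoid M] [AddCommMonoid N]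
  [AddCommMonoid P] [Module R M] [Module R N] [Module R P]

theorem span_image2_tmul_eq_top {s : Set M} {t : Set N} (hs : Submodule.span R s = ⊤)
    (ht : Submodule.span R t = ⊤) :
    Submodule.span R (Set.image2 (· ⊗ₜ[R] ·) s t) = ⊤ := by
  rw [← map₂_mk_top_top_eq_top, ← hs, ← ht, Submodule.map₂_span_span]
  rfl

theorem ext_of_span_eq_top {s : Set M} {t : Set N} (hs : Submodule.span R s = ⊤)
    (ht : Submodule.span R t = ⊤) {F₁ F₂ : M ⊗[R] N →ₗ[R] P}
    (h : ∀ x ∈ s, ∀ y ∈ t, F₁ (x ⊗ₜ y) = F₂ (x ⊗ₜ y)) : F₁ = F₂ :=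
  LinearMap.ext_on (span_image2_tmul_eq_top hs ht) (Set.forall_mem_image2.2 h)

end TensorProduct

namespace DW

section Cocycle

variable {G : Type*} [Group G] {M : Type*} [CommGroup M] {ω : G → G → G → M}

theorem IsNormalized.tauc_one (hnorm : IsNormalized ω) (g h : G) : tauc ω g h 1 = 1 := by
  simp only [tauc, mul_one, mul_inv_cancel, hnorm g h 1 (by simp), hnorm 1 g h (by simp),
    hnorm g 1 h (by simp), inv_one]

theorem IsNormalized.gamc_one_left (hnorm : IsNormalized ω) (h f : G) : gamc ω h 1 f = 1 := by
  simp only [gamc, mul_one, mul_inv_cancel, hnorm h 1 f (by simp),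
    hnorm 1 (h * f * h⁻¹) h (by simp), hnorm 1 h f (by simp), inv_one]

theorem IsNormalized.gamc_one_right (hnorm : IsNormalized ω) (h d : G) : gamc ω h d 1 = 1 := by
  simp only [gamc, mul_one, mul_inv_cancel, hnorm h d 1 (by simp),
    hnorm (h * d * h⁻¹) 1 h (by simp), hnorm (h * d * h⁻¹) h 1 (by simp), inv_one]

/- Both identities are sums of instances of the cocycle condition. The conjugates are named so
that these instances match the goal syntactically, and the instances are combined in
`Additive M` by `abel`. -/

/-- The compatibility of `γ` with `τ` that makes the tensor product of twisted
Yetter–Drinfeld modules a twisted Yetter–Drinfeld module. -/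
theorem IsCocycle.gamc_tauc (hω : IsCocycle ω) (c g e f : G) :
    gamc ω c (g * e * g⁻¹) (g * f * g⁻¹) * tauc ω c g e * tauc ω c g f * gamc ω g e f
      = gamc ω (c * g) e f * tauc ω c g (e * f) := by
  obtain ⟨e', he⟩ : ∃ e', g * e * g⁻¹ = e' := ⟨_, rfl⟩
  obtain ⟨f', hf⟩ : ∃ f', g * f * g⁻¹ = f' := ⟨_, rfl⟩
  obtain ⟨e'', hce⟩ : ∃ e'', c * e' * c⁻¹ = e'' := ⟨_, rfl⟩
  obtain ⟨f'', hcf⟩ : ∃ f'', c * f' * c⁻¹ = f'' := ⟨_, rfl⟩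
  have he₁ : g * e = e' * g := by rw [← he]; group
  have hf₁ : g * f = f' * g := by rw [← hf]; group
  have hce₁ : e'' * c = c * e' := by rw [← hce]; group
  have hcf₁ : c * f' = f'' * c := by rw [← hcf]; group
  have Y₁ := congrArg Additive.ofMul (hω c g e f)
  have Y₂ := congrArg Additive.ofMul (hω c e' g f)
  have Y₃ := congrArg Additive.ofMul (hω c e' f' g)
  have Y₄ := congrArg Additive.ofMul (hω e'' c g f)
  have Y₅ := congrArg Additive.ofMul (hω e'' c f' g)
  have Y₆ := congrArg Additive.ofMul (hω e'' f'' c g)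
  rw [he₁] at Y₁
  rw [hf₁] at Y₂
  rw [hce₁, hf₁] at Y₄
  rw [hce₁, hcf₁] at Y₅
  simp only [gamc, tauc]
  rw [he, hf, hce, hcf, show c * g * e * (c * g)⁻¹ = e'' by rw [← hce, ← he]; group,
    show c * g * f * (c * g)⁻¹ = f'' by rw [← hcf, ← hf]; group,
    show c * g * (e * f) * (c * g)⁻¹ = e'' * f'' by rw [← hce, ← he, ← hcf, ← hf]; group,
    show g * (e * f) * g⁻¹ = e' * f' by rw [← he, ← hf]; group]
  apply Additive.ofMul.injective
  simp only [ofMul_mul, ofMul_inv] at Y₁ Y₂ Y₃ Y₄ Y₅ Y₆ ⊢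
  linear_combination (norm := abel1) Y₂ + Y₅ - Y₁ - Y₃ - Y₄ - Y₆

/-- The compatibility of `γ` with `ω` that makes the associator of twisted Yetter–Drinfeld
modules equivariant. -/
theorem IsCocycle.gamc_assoc (hω : IsCocycle ω) (g d e f : G) :
    gamc ω g d e * gamc ω g (d * e) f * ω d e f
      = ω (g * d * g⁻¹) (g * e * g⁻¹) (g * f * g⁻¹) * gamc ω g e f * gamc ω g d (e * f) := by
  obtain ⟨d', hd⟩ : ∃ d', g * d * g⁻¹ = d' := ⟨_, rfl⟩
  obtain ⟨e', he⟩ : ∃ e', g * e * g⁻¹ = e' := ⟨_, rfl⟩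
  obtain ⟨f', hf⟩ : ∃ f', g * f * g⁻¹ = f' := ⟨_, rfl⟩
  have X₁ := congrArg Additive.ofMul (hω g d e f)
  have X₂ := congrArg Additive.ofMul (hω d' g e f)
  have X₃ := congrArg Additive.ofMul (hω d' e' g f)
  have X₄ := congrArg Additive.ofMul (hω d' e' f' g)
  rw [show d' * g = g * d by rw [← hd]; group] at X₂
  rw [show e' * g = g * e by rw [← he]; group, show g * f = f' * g by rw [← hf]; group] at X₃
  simp only [gamc]
  rw [hd, he, hf, show g * (d * e) * g⁻¹ = d' * e' by rw [← hd, ← he]; group,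
    show g * (e * f) * g⁻¹ = e' * f' by rw [← he, ← hf]; group]
  apply Additive.ofMul.injective
  simp only [ofMul_mul, ofMul_inv] at X₁ X₂ X₃ X₄ ⊢
  linear_combination (norm := abel1) X₂ - X₁ - X₃ + X₄

end Cocycle

section YD

variable {k : Type*} [Field k] {G : Type*} [Group G] [DecidableEq G] {ω : G → G → G → kˣ}
  {A B : Type*} [AddCommGroup A] [Module k A] [AddCommGroup B] [Module k B]

theorem IsTensorStruct.tmul_mem {SA : YDOn k ω A} {SB : YDOn k ω B} {SAB : YDOn k ω (A ⊗[k] B)}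
    (hT : IsTensorStruct SA SB SAB) {d f : G} {a : A} {b : B} (ha : a ∈ SA.grading d)
    (hb : b ∈ SB.grading f) : a ⊗ₜ[k] b ∈ SAB.grading (d * f) := by
  rw [hT.1]
  refine Submodule.mem_iSup_of_mem d ?_
  rw [inv_mul_cancel_left]
  exact Submodule.apply_mem_map₂ _ ha hb

end YD

section Induced

variable {k : Type*} [Field k] {G : Type*} [Group G] [DecidableEq G]
  (ω : G → G → G → kˣ) (H : Subgroup G) {V : Type*} [AddCommGroup V] [Module k V]
  (S : YDOn k (resCocycle ω H) V)

theorem jgen_smul (g : G) (c : k) (v : V) : jgen ω H S g (c • v) = c • jgen ω H S g v := by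
  rw [jgen, jgen, ← Submodule.Quotient.mk_smul, Finsupp.smul_single]

theorem jgen_zero (g : G) : jgen ω H S g 0 = 0 := by
  rw [jgen, Finsupp.single_zero, Submodule.Quotient.mk_zero]

theorem jgen_mul (g : G) (h e : ↥H) {v : V} (hv : v ∈ S.grading e) :
    jgen ω H S (g * h) v = (((tauc ω g h e)⁻¹ : kˣ) : k) • jgen ω H S g (S.act h v) := by
  rw [jgen, jgen, ← Submodule.Quotient.mk_smul, Submodule.Quotient.eq]
  exact Submodule.subset_span ⟨g, h, e, v, hv, rfl⟩

def indGens : Set (IndCarrier ω H S) :=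
  {x | ∃ (g : G) (e : ↥H) (v : V), v ∈ S.grading e ∧ x = jgen ω H S g v}

theorem span_indGens : Submodule.span k (indGens ω H S) = ⊤ := by
  rw [eq_top_iff]
  rintro x -
  obtain ⟨x, rfl⟩ := Submodule.Quotient.mk_surjective _ x
  induction x using Finsupp.induction_linear with
  | zero => exact zero_mem _
  | add x y hx hy => exact add_mem hx hy
  | single g v =>
    have hv : v ∈ ⨆ e, S.grading e := by rw [S.internal.submodule_iSup_eq_top]; trivial
    have hle : (⨆ e, S.grading e) ≤ (Submodule.span k (indGens ω H S)).comap
        ((indRel ω H S).mkQ ∘ₗ Finsupp.lsingle g) :=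
      iSup_le fun e v hv => Submodule.subset_span ⟨g, e, v, hv, rfl⟩
    exact hle hv

variable {ω H S}

theorem IsIndStruct.jgen_mem {T : YDOn k ω (IndCarrier ω H S)} (hT : IsIndStruct ω H S T)
    (g : G) {e : ↥H} {v : V} (hv : v ∈ S.grading e) :
    jgen ω H S g v ∈ T.grading (g * e * g⁻¹) := by
  rw [hT.1]
  exact Submodule.subset_span ⟨g, e, v, hv, rfl, rfl⟩

end Induced

namespace IsMuMap

variable {k : Type*} [Field k] {G : Type*} [Group G] [DecidableEq G] {ω : G → G → G → kˣ}
  {H : Subgroup G} {A B : Type*} [AddCommGroup A] [Module k A] [AddCommGroup B] [Module k B]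
  {SA : YDOn k (resCocycle ω H) A} {SB : YDOn k (resCocycle ω H) B}
  {SAB : YDOn k (resCocycle ω H) (A ⊗[k] B)}
  {μ : IndCarrier ω H SA ⊗[k] IndCarrier ω H SB →ₗ[k] IndCarrier ω H SAB}

theorem map_jgen_tmul_jgen_mul (hμ : IsMuMap ω H SA SB SAB μ) (g : G) (h : ↥H) {d f : ↥H}
    {a : A} {b : B} (ha : a ∈ SA.grading d) (hb : b ∈ SB.grading f) :
    μ (jgen ω H SA g a ⊗ₜ jgen ω H SB (g * h) b)
      = (((tauc ω g h f)⁻¹ : kˣ) : k) • (((gamc ω g d ((h * f * h⁻¹ : ↥H) : G))⁻¹ : kˣ) : k) •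
          jgen ω H SAB g (a ⊗ₜ SB.act h b) := by
  rw [jgen_mul ω H SB g h f hb, TensorProduct.tmul_smul, map_smul,
    hμ.2 g d (h * f * h⁻¹) a _ ha (SB.act_mem h f b hb)]

theorem exists_map_jgen_tmul_jgen_eq (hμ : IsMuMap ω H SA SB SAB μ) (g g' : G) {d f : ↥H}
    {a : A} {b : B} (ha : a ∈ SA.grading d) (hb : b ∈ SB.grading f) :
    ∃ c : A ⊗[k] B, μ (jgen ω H SA g a ⊗ₜ jgen ω H SB g' b) = jgen ω H SAB g c := by
  by_cases hg : g⁻¹ * g' ∈ H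
  · obtain ⟨h, rfl⟩ : ∃ h : ↥H, g' = g * h := ⟨⟨g⁻¹ * g', hg⟩, by simp⟩
    rw [hμ.map_jgen_tmul_jgen_mul g h ha hb, ← jgen_smul, ← jgen_smul]
    exact ⟨_, rfl⟩
  · exact ⟨0, by rw [hμ.1 g g' hg, jgen_zero]⟩

variable {TA : YDOn k ω (IndCarrier ω H SA)} {TB : YDOn k ω (IndCarrier ω H SB)}
  {TAB : YDOn k ω (IndCarrier ω H SAB)} {T : YDOn k ω (IndCarrier ω H SA ⊗[k] IndCarrier ω H SB)}

theorem map_jgen_tmul_jgen_mem (hμ : IsMuMap ω H SA SB SAB μ) (hSAB : IsTensorStruct SA SB SAB)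
    (hTAB : IsIndStruct ω H SAB TAB) (g g' : G) {d f : ↥H} {a : A} {b : B}
    (ha : a ∈ SA.grading d) (hb : b ∈ SB.grading f) :
    μ (jgen ω H SA g a ⊗ₜ jgen ω H SB g' b) ∈ TAB.grading (g * d * g⁻¹ * (g' * f * g'⁻¹)) := by
  by_cases hg : g⁻¹ * g' ∈ H
  · obtain ⟨h, rfl⟩ : ∃ h : ↥H, g' = g * h := ⟨⟨g⁻¹ * g', hg⟩, by simp⟩
    rw [hμ.map_jgen_tmul_jgen_mul g h ha hb]
    refine Submodule.smul_mem _ _ (Submodule.smul_mem _ _ ?_)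
    convert hTAB.jgen_mem g (hSAB.tmul_mem ha (SB.act_mem h f b hb)) using 2
    push_cast
    group
  · rw [hμ.1 g g' hg]
    exact zero_mem _

theorem map_mem_grading (hμ : IsMuMap ω H SA SB SAB μ) (hSAB : IsTensorStruct SA SB SAB)
    (hTA : IsIndStruct ω H SA TA) (hTB : IsIndStruct ω H SB TB) (hTAB : IsIndStruct ω H SAB TAB)
    (hT : IsTensorStruct TA TB T) {d : G} {x : IndCarrier ω H SA ⊗[k] IndCarrier ω H SB}
    (hx : x ∈ T.grading d) : μ x ∈ TAB.grading d := by
  rw [hT.1] at hx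
  refine (iSup_le fun e => ?_ : _ ≤ (TAB.grading d).comap μ) hx
  rw [hTA.1, hTB.1, Submodule.map₂_span_span, Submodule.span_le]
  rintro _ ⟨_, ⟨g, d', a, ha, rfl, rfl⟩, _, ⟨g', f, b, hb, hdeg, rfl⟩, rfl⟩
  have hmem := hμ.map_jgen_tmul_jgen_mem hSAB hTAB g g' ha hb
  rwa [hdeg, mul_inv_cancel_left] at hmem

theorem map_act_jgen_tmul_jgen (hω : IsCocycle ω) (hμ : IsMuMap ω H SA SB SAB μ)
    (hSAB : IsTensorStruct SA SB SAB) (hTA : IsIndStruct ω H SA TA) (hTB : IsIndStruct ω H SB TB)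
    (hTAB : IsIndStruct ω H SAB TAB) (hT : IsTensorStruct TA TB T) (c g : G) {d f : ↥H}
    {a : A} {b : B} (ha : a ∈ SA.grading d) (hb : b ∈ SB.grading f) :
    μ (T.act c (jgen ω H SA g a ⊗ₜ jgen ω H SB g b))
      = TAB.act c (μ (jgen ω H SA g a ⊗ₜ jgen ω H SB g b)) := by
  rw [hT.2 c _ _ _ _ (hTA.jgen_mem g ha) (hTB.jgen_mem g hb), hTA.2 c g d a ha,
    hTB.2 c g f b hb, hμ.2 g d f a b ha hb, map_smul (TAB.act c),
    hTAB.2 c g (d * f) _ (hSAB.tmul_mem ha hb),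
    ← TensorProduct.smul_tmul', TensorProduct.tmul_smul, map_smul, map_smul, map_smul,
    hμ.2 (c * g) d f a b ha hb]
  simp only [smul_smul]
  congr 1
  have key := congrArg Units.val (hω.gamc_tauc c g d f)
  push_cast at key ⊢
  field_simp
  linear_combination key

theorem comp_act (hω : IsCocycle ω) (hμ : IsMuMap ω H SA SB SAB μ)
    (hSAB : IsTensorStruct SA SB SAB) (hTA : IsIndStruct ω H SA TA) (hTB : IsIndStruct ω H SB TB)
    (hTAB : IsIndStruct ω H SAB TAB) (hT : IsTensorStruct TA TB T) (c : G) :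
    μ ∘ₗ T.act c = TAB.act c ∘ₗ μ := by
  refine TensorProduct.ext_of_span_eq_top (span_indGens ω H SA) (span_indGens ω H SB) ?_
  rintro _ ⟨g, d, a, ha, rfl⟩ _ ⟨g', f, b, hb, rfl⟩
  rw [LinearMap.comp_apply, LinearMap.comp_apply]
  by_cases hg : g⁻¹ * g' ∈ H
  · obtain ⟨h, rfl⟩ : ∃ h : ↥H, g' = g * h := ⟨⟨g⁻¹ * g', hg⟩, by simp⟩
    rw [jgen_mul ω H SB g h f hb, TensorProduct.tmul_smul, map_smul, map_smul, map_smul,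
      map_smul, hμ.map_act_jgen_tmul_jgen hω hSAB hTA hTB hTAB hT c g ha (SB.act_mem h f b hb)]
  · have hcg : (c * g)⁻¹ * (c * g') ∉ H := by
      rwa [mul_inv_rev, mul_assoc, inv_mul_cancel_left]
    rw [hT.2 c _ _ _ _ (hTA.jgen_mem g ha) (hTB.jgen_mem g' hb), hTA.2 c g d a ha,
      hTB.2 c g' f b hb, ← TensorProduct.smul_tmul', TensorProduct.tmul_smul, map_smul,
      map_smul, map_smul, hμ.1 _ _ hcg, hμ.1 _ _ hg, smul_zero, smul_zero, smul_zero, map_zero]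

end IsMuMap

section Coherence

variable {k : Type*} [Field k] {G : Type*} [Group G] [DecidableEq G] {ω : G → G → G → kˣ}
  {H : Subgroup G} {V W U : Type*} [AddCommGroup V] [Module k V] [AddCommGroup W] [Module k W]
  [AddCommGroup U] [Module k U]
  {SV : YDOn k (resCocycle ω H) V} {SW : YDOn k (resCocycle ω H) W}
  {SU : YDOn k (resCocycle ω H) U} {SVW : YDOn k (resCocycle ω H) (V ⊗[k] W)}
  {SWU : YDOn k (resCocycle ω H) (W ⊗[k] U)}
  {SVW_U : YDOn k (resCocycle ω H) ((V ⊗[k] W) ⊗[k] U)}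
  {SV_WU : YDOn k (resCocycle ω H) (V ⊗[k] (W ⊗[k] U))}
  {αH : (V ⊗[k] W) ⊗[k] U →ₗ[k] V ⊗[k] (W ⊗[k] U)}
  {TV : YDOn k ω (IndCarrier ω H SV)} {TW : YDOn k ω (IndCarrier ω H SW)}
  {TU : YDOn k ω (IndCarrier ω H SU)}
  {Iα : IndCarrier ω H SVW_U →ₗ[k] IndCarrier ω H SV_WU}
  {μ₁ : IndCarrier ω H SV ⊗[k] IndCarrier ω H SW →ₗ[k] IndCarrier ω H SVW}
  {μ₂ : IndCarrier ω H SVW ⊗[k] IndCarrier ω H SU →ₗ[k] IndCarrier ω H SVW_U}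
  {μ₃ : IndCarrier ω H SW ⊗[k] IndCarrier ω H SU →ₗ[k] IndCarrier ω H SWU}
  {μ₄ : IndCarrier ω H SV ⊗[k] IndCarrier ω H SWU →ₗ[k] IndCarrier ω H SV_WU}
  {αG : (IndCarrier ω H SV ⊗[k] IndCarrier ω H SW) ⊗[k] IndCarrier ω H SU →ₗ[k]
    IndCarrier ω H SV ⊗[k] (IndCarrier ω H SW ⊗[k] IndCarrier ω H SU)}

theorem assoc_comp_apply_jgen (hTV : IsIndStruct ω H SV TV) (hTW : IsIndStruct ω H SW TW)
    (hTU : IsIndStruct ω H SU TU) (hαG : IsAssocMap TV TW TU αG) (g₁ g₂ g₃ : G) {d e f : ↥H}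
    {v : V} {w : W} {u : U} (hv : v ∈ SV.grading d) (hw : w ∈ SW.grading e)
    (hu : u ∈ SU.grading f) :
    (μ₄ ∘ₗ TensorProduct.map LinearMap.id μ₃ ∘ₗ αG)
        ((jgen ω H SV g₁ v ⊗ₜ jgen ω H SW g₂ w) ⊗ₜ jgen ω H SU g₃ u)
      = (((ω (g₁ * d * g₁⁻¹) (g₂ * e * g₂⁻¹) (g₃ * f * g₃⁻¹))⁻¹ : kˣ) : k) •
          μ₄ (jgen ω H SV g₁ v ⊗ₜ μ₃ (jgen ω H SW g₂ w ⊗ₜ jgen ω H SU g₃ u)) := by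
  rw [LinearMap.comp_apply, LinearMap.comp_apply, hαG _ _ _ _ _ _ (hTV.jgen_mem g₁ hv)
    (hTW.jgen_mem g₂ hw) (hTU.jgen_mem g₃ hu), map_smul, map_smul, TensorProduct.map_tmul,
    LinearMap.id_apply]

theorem lax_assoc_apply_jgen (hω : IsCocycle ω) (hSVW : IsTensorStruct SV SW SVW)
    (hSWU : IsTensorStruct SW SU SWU) (hαH : IsAssocMap SV SW SU αH)
    (hTV : IsIndStruct ω H SV TV) (hTW : IsIndStruct ω H SW TW) (hTU : IsIndStruct ω H SU TU)
    (hIα : IsIndMap ω H SVW_U SV_WU αH Iα) (hμ₁ : IsMuMap ω H SV SW SVW μ₁)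
    (hμ₂ : IsMuMap ω H SVW SU SVW_U μ₂) (hμ₃ : IsMuMap ω H SW SU SWU μ₃)
    (hμ₄ : IsMuMap ω H SV SWU SV_WU μ₄) (hαG : IsAssocMap TV TW TU αG) (g : G) {d e f : ↥H}
    {v : V} {w : W} {u : U} (hv : v ∈ SV.grading d) (hw : w ∈ SW.grading e)
    (hu : u ∈ SU.grading f) :
    (μ₄ ∘ₗ TensorProduct.map LinearMap.id μ₃ ∘ₗ αG)
        ((jgen ω H SV g v ⊗ₜ jgen ω H SW g w) ⊗ₜ jgen ω H SU g u)
      = (Iα ∘ₗ μ₂ ∘ₗ TensorProduct.map μ₁ LinearMap.id)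
        ((jgen ω H SV g v ⊗ₜ jgen ω H SW g w) ⊗ₜ jgen ω H SU g u) := by
  rw [assoc_comp_apply_jgen hTV hTW hTU hαG g g g hv hw hu, hμ₃.2 g e f w u hw hu,
    TensorProduct.tmul_smul, map_smul, hμ₄.2 g d (e * f) v _ hv (hSWU.tmul_mem hw hu),
    LinearMap.comp_apply, LinearMap.comp_apply, TensorProduct.map_tmul, LinearMap.id_apply,
    hμ₁.2 g d e v w hv hw, ← TensorProduct.smul_tmul', map_smul,
    hμ₂.2 g (d * e) f _ u (hSVW.tmul_mem hv hw) hu, map_smul, map_smul, hIα g,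
    hαH d e f v w u hv hw hu, jgen_smul]
  simp only [smul_smul]
  congr 1
  have key := congrArg Units.val (hω.gamc_assoc g d e f)
  simp only [resCocycle]
  push_cast at key ⊢
  field_simp
  linear_combination key

theorem lax_assoc (hω : IsCocycle ω) (hSVW : IsTensorStruct SV SW SVW)
    (hSWU : IsTensorStruct SW SU SWU) (hαH : IsAssocMap SV SW SU αH)
    (hTV : IsIndStruct ω H SV TV) (hTW : IsIndStruct ω H SW TW) (hTU : IsIndStruct ω H SU TU)
    (hIα : IsIndMap ω H SVW_U SV_WU αH Iα) (hμ₁ : IsMuMap ω H SV SW SVW μ₁)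
    (hμ₂ : IsMuMap ω H SVW SU SVW_U μ₂) (hμ₃ : IsMuMap ω H SW SU SWU μ₃)
    (hμ₄ : IsMuMap ω H SV SWU SV_WU μ₄) (hαG : IsAssocMap TV TW TU αG) :
    μ₄ ∘ₗ TensorProduct.map LinearMap.id μ₃ ∘ₗ αG
      = Iα ∘ₗ μ₂ ∘ₗ TensorProduct.map μ₁ LinearMap.id := by
  refine TensorProduct.ext_of_span_eq_top (TensorProduct.span_image2_tmul_eq_top
    (span_indGens ω H SV) (span_indGens ω H SW)) (span_indGens ω H SU) ?_
  rintro _ ⟨_, ⟨g₁, d, v, hv, rfl⟩, _, ⟨g₂, e, w, hw, rfl⟩, rfl⟩ _ ⟨g₃, f, u, hu, rfl⟩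
  have expand := assoc_comp_apply_jgen (μ₃ := μ₃) (μ₄ := μ₄) hTV hTW hTU hαG g₁ g₂ g₃ hv hw hu
  simp only [LinearMap.comp_apply, TensorProduct.map_tmul, LinearMap.id_apply] at expand ⊢
  by_cases h₁₂ : g₁⁻¹ * g₂ ∈ H
  · by_cases h₁₃ : g₁⁻¹ * g₃ ∈ H
    · obtain ⟨h, rfl⟩ : ∃ h : ↥H, g₂ = g₁ * h := ⟨⟨g₁⁻¹ * g₂, h₁₂⟩, by simp⟩
      obtain ⟨h', rfl⟩ : ∃ h : ↥H, g₃ = g₁ * h := ⟨⟨g₁⁻¹ * g₃, h₁₃⟩, by simp⟩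
      have := lax_assoc_apply_jgen hω hSVW hSWU hαH hTV hTW hTU hIα hμ₁ hμ₂ hμ₃ hμ₄ hαG g₁ hv
        (SW.act_mem h e w hw) (SU.act_mem h' f u hu)
      simp only [LinearMap.comp_apply, TensorProduct.map_tmul, LinearMap.id_apply] at this
      rw [jgen_mul ω H SW g₁ h e hw, jgen_mul ω H SU g₁ h' f hu]
      simp only [TensorProduct.tmul_smul, ← TensorProduct.smul_tmul', map_smul, this]
    · have h₂₃ : g₂⁻¹ * g₃ ∉ H := fun h₂₃ => h₁₃ (by simpa [mul_assoc] using mul_mem h₁₂ h₂₃)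
      obtain ⟨c, hc⟩ := hμ₁.exists_map_jgen_tmul_jgen_eq g₁ g₂ hv hw
      rw [expand, hμ₃.1 g₂ g₃ h₂₃, TensorProduct.tmul_zero, map_zero, smul_zero, hc,
        hμ₂.1 g₁ g₃ h₁₃, map_zero]
  · obtain ⟨c, hc⟩ := hμ₃.exists_map_jgen_tmul_jgen_eq g₂ g₃ hw hu
    rw [expand, hc, hμ₄.1 g₁ g₂ h₁₂, hμ₁.1 g₁ g₂ h₁₂, smul_zero, TensorProduct.zero_tmul,
      map_zero, map_zero]

end Coherence

section Unit

variable {k : Type*} [Field k] {G : Type*} [Group G] [DecidableEq G] {ω : G → G → G → kˣ}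
  {H : Subgroup G} {V : Type*} [AddCommGroup V] [Module k V] {SV : YDOn k (resCocycle ω H) V}
  {S1 : YDOn k (resCocycle ω H) k} {R : Finset G} {η : k →ₗ[k] IndCarrier ω H S1}

theorem lax_left_unit (hnorm : IsNormalized ω) (hS1 : IsUnitStruct S1)
    (hη : IsUnitMap ω H S1 R η) {S1V : YDOn k (resCocycle ω H) (k ⊗[k] V)}
    {Ilam : IndCarrier ω H S1V →ₗ[k] IndCarrier ω H SV}
    (hIlam : IsIndMap ω H S1V SV (TensorProduct.lid k V).toLinearMap Ilam)
    {μl : IndCarrier ω H S1 ⊗[k] IndCarrier ω H SV →ₗ[k] IndCarrier ω H S1V}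
    (hμl : IsMuMap ω H S1 SV S1V μl) :
    Ilam ∘ₗ μl ∘ₗ TensorProduct.map η LinearMap.id
      = (TensorProduct.lid k (IndCarrier ω H SV)).toLinearMap := by
  refine TensorProduct.ext_of_span_eq_top Ideal.span_singleton_one (span_indGens ω H SV) ?_
  rintro _ rfl _ ⟨g, e, v, hv, rfl⟩
  obtain ⟨r, ⟨hrR, hr⟩, hunique⟩ := hη.1 g
  obtain ⟨h, hg⟩ : ∃ h : ↥H, g = r * h := ⟨⟨r⁻¹ * g, by simpa using inv_mem hr⟩, by simp⟩
  have hside : ∀ r' ∈ R, r' ≠ r →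
      Ilam (μl (jgen ω H S1 r' 1 ⊗ₜ jgen ω H SV g v)) = 0 := fun r' hr' hne => by
    rw [hμl.1 r' g (fun hmem => hne (hunique r' ⟨hr', by simpa using inv_mem hmem⟩)), map_zero]
  simp only [LinearMap.comp_apply, TensorProduct.map_tmul, LinearMap.id_apply, hη.2,
    TensorProduct.sum_tmul, map_sum, LinearEquiv.coe_coe, TensorProduct.lid_tmul, one_smul]
  rw [Finset.sum_eq_single_of_mem r hrR hside, hg, jgen_mul ω H SV r h e hv,
    TensorProduct.tmul_smul, map_smul, map_smul,
    hμl.2 r 1 (h * e * h⁻¹) 1 _ (by rw [hS1.1]; trivial) (SV.act_mem h e v hv),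
    OneMemClass.coe_one, hnorm.gamc_one_left, inv_one, Units.val_one, one_smul, hIlam,
    LinearEquiv.coe_coe, TensorProduct.lid_tmul, one_smul]

theorem lax_right_unit (hnorm : IsNormalized ω) (hS1 : IsUnitStruct S1)
    (hη : IsUnitMap ω H S1 R η) {SV1 : YDOn k (resCocycle ω H) (V ⊗[k] k)}
    {Irho : IndCarrier ω H SV1 →ₗ[k] IndCarrier ω H SV}
    (hIrho : IsIndMap ω H SV1 SV (TensorProduct.rid k V).toLinearMap Irho)
    {μr : IndCarrier ω H SV ⊗[k] IndCarrier ω H S1 →ₗ[k] IndCarrier ω H SV1}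
    (hμr : IsMuMap ω H SV S1 SV1 μr) :
    Irho ∘ₗ μr ∘ₗ TensorProduct.map LinearMap.id η
      = (TensorProduct.rid k (IndCarrier ω H SV)).toLinearMap := by
  refine TensorProduct.ext_of_span_eq_top (span_indGens ω H SV) Ideal.span_singleton_one ?_
  rintro _ ⟨g, e, v, hv, rfl⟩ _ rfl
  obtain ⟨r, ⟨hrR, hr⟩, hunique⟩ := hη.1 g
  have hside : ∀ r' ∈ R, r' ≠ r →
      Irho (μr (jgen ω H SV g v ⊗ₜ jgen ω H S1 r' 1)) = 0 := fun r' hr' hne => by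
    rw [hμr.1 g r' (fun hmem => hne (hunique r' ⟨hr', hmem⟩)), map_zero]
  obtain ⟨h, rfl⟩ : ∃ h : ↥H, r = g * h := ⟨⟨g⁻¹ * r, hr⟩, by simp⟩
  have h1 : (1 : k) ∈ S1.grading 1 := by rw [hS1.1]; trivial
  simp only [LinearMap.comp_apply, TensorProduct.map_tmul, LinearMap.id_apply, hη.2,
    TensorProduct.tmul_sum, map_sum, LinearEquiv.coe_coe, TensorProduct.rid_tmul, one_smul]
  rw [Finset.sum_eq_single_of_mem _ hrR hside, jgen_mul ω H S1 g h 1 h1, OneMemClass.coe_one,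
    hnorm.tauc_one, hS1.2.2 h, LinearMap.id_apply, inv_one, Units.val_one, one_smul,
    hμr.2 g e 1 v 1 hv h1, OneMemClass.coe_one, hnorm.gamc_one_right, inv_one, Units.val_one,
    one_smul, hIrho, LinearEquiv.coe_coe, TensorProduct.rid_tmul, one_smul]

end Unit

end DW

open DW

theorem induction_lax_general {k : Type*} [Field k] {G : Type*} [Group G]
    [DecidableEq G] (ω : G → G → G → kˣ)
    (hω : IsCocycle ω) (hnorm : IsNormalized ω) (H : Subgroup G) :
    -- μ_{V,W} is a morphism of twisted Yetter–Drinfeld modules over (G, ω)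
    (∀ (V W : Type) [AddCommGroup V] [Module k V] [AddCommGroup W] [Module k W]
        (SV : YDOn k (resCocycle ω H) V) (SW : YDOn k (resCocycle ω H) W)
        (SVW : YDOn k (resCocycle ω H) (V ⊗[k] W)), IsTensorStruct SV SW SVW →
      ∀ (TV : YDOn k ω (IndCarrier ω H SV)) (TW : YDOn k ω (IndCarrier ω H SW))
        (TVW : YDOn k ω (IndCarrier ω H SVW)),
        IsIndStruct ω H SV TV → IsIndStruct ω H SW TW → IsIndStruct ω H SVW TVW →
      ∀ (Tt : YDOn k ω (IndCarrier ω H SV ⊗[k] IndCarrier ω H SW)),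
        IsTensorStruct TV TW Tt →
      ∀ μ : IndCarrier ω H SV ⊗[k] IndCarrier ω H SW →ₗ[k] IndCarrier ω H SVW,
        IsMuMap ω H SV SW SVW μ → IsYDHom Tt TVW μ) ∧
    -- lax associativity coherence
    (∀ (V W U : Type) [AddCommGroup V] [Module k V] [AddCommGroup W] [Module k W]
        [AddCommGroup U] [Module k U]
        (SV : YDOn k (resCocycle ω H) V) (SW : YDOn k (resCocycle ω H) W)
        (SU : YDOn k (resCocycle ω H) U)
        (SVW : YDOn k (resCocycle ω H) (V ⊗[k] W)) (_ : IsTensorStruct SV SW SVW)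
        (SWU : YDOn k (resCocycle ω H) (W ⊗[k] U)) (_ : IsTensorStruct SW SU SWU)
        (SVW_U : YDOn k (resCocycle ω H) ((V ⊗[k] W) ⊗[k] U))
        (_ : IsTensorStruct SVW SU SVW_U)
        (SV_WU : YDOn k (resCocycle ω H) (V ⊗[k] (W ⊗[k] U)))
        (_ : IsTensorStruct SV SWU SV_WU)
        (αH : (V ⊗[k] W) ⊗[k] U →ₗ[k] V ⊗[k] (W ⊗[k] U)) (_ : IsAssocMap SV SW SU αH)
        (TV : YDOn k ω (IndCarrier ω H SV)) (_ : IsIndStruct ω H SV TV)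
        (TW : YDOn k ω (IndCarrier ω H SW)) (_ : IsIndStruct ω H SW TW)
        (TU : YDOn k ω (IndCarrier ω H SU)) (_ : IsIndStruct ω H SU TU)
        (Iα : IndCarrier ω H SVW_U →ₗ[k] IndCarrier ω H SV_WU)
        (_ : IsIndMap ω H SVW_U SV_WU αH Iα)
        (μ₁ : IndCarrier ω H SV ⊗[k] IndCarrier ω H SW →ₗ[k] IndCarrier ω H SVW)
        (_ : IsMuMap ω H SV SW SVW μ₁)
        (μ₂ : IndCarrier ω H SVW ⊗[k] IndCarrier ω H SU →ₗ[k] IndCarrier ω H SVW_U)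
        (_ : IsMuMap ω H SVW SU SVW_U μ₂)
        (μ₃ : IndCarrier ω H SW ⊗[k] IndCarrier ω H SU →ₗ[k] IndCarrier ω H SWU)
        (_ : IsMuMap ω H SW SU SWU μ₃)
        (μ₄ : IndCarrier ω H SV ⊗[k] IndCarrier ω H SWU →ₗ[k] IndCarrier ω H SV_WU)
        (_ : IsMuMap ω H SV SWU SV_WU μ₄)
        (αG : (IndCarrier ω H SV ⊗[k] IndCarrier ω H SW) ⊗[k] IndCarrier ω H SU →ₗ[k]
            IndCarrier ω H SV ⊗[k] (IndCarrier ω H SW ⊗[k] IndCarrier ω H SU)),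
        IsAssocMap TV TW TU αG →
        μ₄ ∘ₗ TensorProduct.map LinearMap.id μ₃ ∘ₗ αG
          = Iα ∘ₗ μ₂ ∘ₗ TensorProduct.map μ₁ LinearMap.id) ∧
    -- lax unitality coherence (left and right)
    (∀ (V : Type) [AddCommGroup V] [Module k V]
        (SV : YDOn k (resCocycle ω H) V)
        (S1 : YDOn k (resCocycle ω H) k) (_ : IsUnitStruct S1)
        (R : Finset G) (η : k →ₗ[k] IndCarrier ω H S1) (_ : IsUnitMap ω H S1 R η)
        (S1V : YDOn k (resCocycle ω H) (k ⊗[k] V)) (_ : IsTensorStruct S1 SV S1V)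
        (SV1 : YDOn k (resCocycle ω H) (V ⊗[k] k)) (_ : IsTensorStruct SV S1 SV1)
        (Ilam : IndCarrier ω H S1V →ₗ[k] IndCarrier ω H SV)
        (_ : IsIndMap ω H S1V SV (TensorProduct.lid k V).toLinearMap Ilam)
        (Irho : IndCarrier ω H SV1 →ₗ[k] IndCarrier ω H SV)
        (_ : IsIndMap ω H SV1 SV (TensorProduct.rid k V).toLinearMap Irho)
        (μl : IndCarrier ω H S1 ⊗[k] IndCarrier ω H SV →ₗ[k] IndCarrier ω H S1V)
        (_ : IsMuMap ω H S1 SV S1V μl)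
        (μr : IndCarrier ω H SV ⊗[k] IndCarrier ω H S1 →ₗ[k] IndCarrier ω H SV1),
        IsMuMap ω H SV S1 SV1 μr →
        Ilam ∘ₗ μl ∘ₗ TensorProduct.map η LinearMap.id
          = (TensorProduct.lid k (IndCarrier ω H SV)).toLinearMap ∧
        Irho ∘ₗ μr ∘ₗ TensorProduct.map LinearMap.id η
          = (TensorProduct.rid k (IndCarrier ω H SV)).toLinearMap) := by
  refine ⟨?_, ?_, ?_⟩
  · intro V W _ _ _ _ SV SW SVW hSVW TV TW TVW hTV hTW hTVW Tt hTt μ hμ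
    exact ⟨fun _ _ hx => hμ.map_mem_grading hSVW hTV hTW hTVW hTt hx,
      hμ.comp_act hω hSVW hTV hTW hTVW hTt⟩
  · intro V W U _ _ _ _ _ _ SV SW SU SVW hSVW SWU hSWU _ _ _ _ αH hαH TV hTV TW hTW TU hTU
      Iα hIα μ₁ hμ₁ μ₂ hμ₂ μ₃ hμ₃ μ₄ hμ₄ αG hαG
    exact lax_assoc hω hSVW hSWU hαH hTV hTW hTU hIα hμ₁ hμ₂ hμ₃ hμ₄ hαG
  · intro V _ _ SV S1 hS1 R η hη S1V _ SV1 _ Ilam hIlam Irho hIrho μl hμl μr hμr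
    exact ⟨lax_left_unit hnorm hS1 hη hIlam hμl, lax_right_unit hnorm hS1 hη hIrho hμr⟩

/-- Lemma 3.9: the natural transformation `μ_{V,W}` — which vanishes on
`(g⊗v)⊗(g'⊗w)` for `g⁻¹g' ∉ H` and satisfies
`μ((g⊗v_d)⊗(g⊗w_f)) = γ(g)(d,f)⁻¹ g⊗(v_d⊗w_f)` — together with the unit
`1 ↦ ∑ᵢ gᵢ⊗1` (sum over left coset representatives of `H` in `G`) equips the induction
functor `I : Z(Vect_H^ω) → Z(Vect_G^ω)` with a lax monoidal structure: each `μ_{V,W}` is a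
morphism of twisted Yetter–Drinfeld modules over `(G,ω)` and the lax associativity and
unitality coherence conditions hold. -/
theorem induction_lax {k : Type*} [Field k] [IsAlgClosed k] {G : Type*} [Group G]
    [Finite G] [DecidableEq G] (ω : G → G → G → kˣ)
    (hω : IsCocycle ω) (hnorm : IsNormalized ω) (H : Subgroup G) :
    -- μ_{V,W} is a morphism of twisted Yetter–Drinfeld modules over (G, ω)
    (∀ (V W : Type) [AddCommGroup V] [Module k V] [AddCommGroup W] [Module k W]
        (SV : YDOn k (resCocycle ω H) V) (SW : YDOn k (resCocycle ω H) W)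
        (SVW : YDOn k (resCocycle ω H) (V ⊗[k] W)), IsTensorStruct SV SW SVW →
      ∀ (TV : YDOn k ω (IndCarrier ω H SV)) (TW : YDOn k ω (IndCarrier ω H SW))
        (TVW : YDOn k ω (IndCarrier ω H SVW)),
        IsIndStruct ω H SV TV → IsIndStruct ω H SW TW → IsIndStruct ω H SVW TVW →
      ∀ (Tt : YDOn k ω (IndCarrier ω H SV ⊗[k] IndCarrier ω H SW)),
        IsTensorStruct TV TW Tt →
      ∀ μ : IndCarrier ω H SV ⊗[k] IndCarrier ω H SW →ₗ[k] IndCarrier ω H SVW,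
        IsMuMap ω H SV SW SVW μ → IsYDHom Tt TVW μ) ∧
    -- lax associativity coherence
    (∀ (V W U : Type) [AddCommGroup V] [Module k V] [AddCommGroup W] [Module k W]
        [AddCommGroup U] [Module k U]
        (SV : YDOn k (resCocycle ω H) V) (SW : YDOn k (resCocycle ω H) W)
        (SU : YDOn k (resCocycle ω H) U)
        (SVW : YDOn k (resCocycle ω H) (V ⊗[k] W)) (_ : IsTensorStruct SV SW SVW)
        (SWU : YDOn k (resCocycle ω H) (W ⊗[k] U)) (_ : IsTensorStruct SW SU SWU)
        (SVW_U : YDOn k (resCocycle ω H) ((V ⊗[k] W) ⊗[k] U))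
        (_ : IsTensorStruct SVW SU SVW_U)
        (SV_WU : YDOn k (resCocycle ω H) (V ⊗[k] (W ⊗[k] U)))
        (_ : IsTensorStruct SV SWU SV_WU)
        (αH : (V ⊗[k] W) ⊗[k] U →ₗ[k] V ⊗[k] (W ⊗[k] U)) (_ : IsAssocMap SV SW SU αH)
        (TV : YDOn k ω (IndCarrier ω H SV)) (_ : IsIndStruct ω H SV TV)
        (TW : YDOn k ω (IndCarrier ω H SW)) (_ : IsIndStruct ω H SW TW)
        (TU : YDOn k ω (IndCarrier ω H SU)) (_ : IsIndStruct ω H SU TU)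
        (Iα : IndCarrier ω H SVW_U →ₗ[k] IndCarrier ω H SV_WU)
        (_ : IsIndMap ω H SVW_U SV_WU αH Iα)
        (μ₁ : IndCarrier ω H SV ⊗[k] IndCarrier ω H SW →ₗ[k] IndCarrier ω H SVW)
        (_ : IsMuMap ω H SV SW SVW μ₁)
        (μ₂ : IndCarrier ω H SVW ⊗[k] IndCarrier ω H SU →ₗ[k] IndCarrier ω H SVW_U)
        (_ : IsMuMap ω H SVW SU SVW_U μ₂)
        (μ₃ : IndCarrier ω H SW ⊗[k] IndCarrier ω H SU →ₗ[k] IndCarrier ω H SWU)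
        (_ : IsMuMap ω H SW SU SWU μ₃)
        (μ₄ : IndCarrier ω H SV ⊗[k] IndCarrier ω H SWU →ₗ[k] IndCarrier ω H SV_WU)
        (_ : IsMuMap ω H SV SWU SV_WU μ₄)
        (αG : (IndCarrier ω H SV ⊗[k] IndCarrier ω H SW) ⊗[k] IndCarrier ω H SU →ₗ[k]
            IndCarrier ω H SV ⊗[k] (IndCarrier ω H SW ⊗[k] IndCarrier ω H SU)),
        IsAssocMap TV TW TU αG →
        μ₄ ∘ₗ TensorProduct.map LinearMap.id μ₃ ∘ₗ αG
          = Iα ∘ₗ μ₂ ∘ₗ TensorProduct.map μ₁ LinearMap.id) ∧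
    -- lax unitality coherence (left and right)
    (∀ (V : Type) [AddCommGroup V] [Module k V]
        (SV : YDOn k (resCocycle ω H) V)
        (S1 : YDOn k (resCocycle ω H) k) (_ : IsUnitStruct S1)
        (R : Finset G) (η : k →ₗ[k] IndCarrier ω H S1) (_ : IsUnitMap ω H S1 R η)
        (S1V : YDOn k (resCocycle ω H) (k ⊗[k] V)) (_ : IsTensorStruct S1 SV S1V)
        (SV1 : YDOn k (resCocycle ω H) (V ⊗[k] k)) (_ : IsTensorStruct SV S1 SV1)
        (Ilam : IndCarrier ω H S1V →ₗ[k] IndCarrier ω H SV)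
        (_ : IsIndMap ω H S1V SV (TensorProduct.lid k V).toLinearMap Ilam)
        (Irho : IndCarrier ω H SV1 →ₗ[k] IndCarrier ω H SV)
        (_ : IsIndMap ω H SV1 SV (TensorProduct.rid k V).toLinearMap Irho)
        (μl : IndCarrier ω H S1 ⊗[k] IndCarrier ω H SV →ₗ[k] IndCarrier ω H S1V)
        (_ : IsMuMap ω H S1 SV S1V μl)
        (μr : IndCarrier ω H SV ⊗[k] IndCarrier ω H S1 →ₗ[k] IndCarrier ω H SV1),
        IsMuMap ω H SV S1 SV1 μr →
        Ilam ∘ₗ μl ∘ₗ TensorProduct.map η LinearMap.id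
          = (TensorProduct.lid k (IndCarrier ω H SV)).toLinearMap ∧
        Irho ∘ₗ μr ∘ₗ TensorProduct.map LinearMap.id η
          = (TensorProduct.rid k (IndCarrier ω H SV)).toLinearMap) :=
  induction_lax_general ω hω hnorm H
end
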